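/- arXiv:1309.0450 — 6 statements merged into one kernel-verified Lean document; each statement's English description precedes it below -/
import Mathlib

section
/- Let x : Pairs(n) → ℝ̄ with x_{{i,j}} ≠ −∞ satisfy the caterpillar conditions: for all distinct k, l ∉ {i,j}, max(x_{ik} + x_{jl}, x_{il} + x_{jk}) = x_{ij} + x_{kl}, where sums in ℝ̄ = ℝ ∪ {−∞} are taken with (−∞) + a = −∞. Let δ be the Gauss seminorm on R(ij) with weights ρ_q := x_q − x_{{i,j}} for q ∈ I(ij) (with (−∞) − r := −∞). Then δ(u_q) = exp(x_q − x_{{i,j}}) for every pair q ∈ Pairs(n) with q ≠ {i,j}, where exp(−∞) := 0; here u_q denotes the variable for q ∈ I(ij) and the binomial u_{ik}u_{jl} − u_{il}u_{jk} for q = {k,l} with k, l ∉ {i,j}. In particular the Gauss seminorm is a section of the tropicalization map over the points of the cone of the caterpillar tree with endpoint leaves i and j. -/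
open MvPolynomial

/- ℝ̄ = ℝ ∪ {−∞} -/
abbrev Rbar := WithBot ℝ

/-- exp on ℝ̄, with exp(−∞) := 0. -/
noncomputable def expBar : Rbar → ℝ := WithBot.recBotCoe 0 Real.exp

/-- `abv` is a nonarchimedean absolute value on the field `K`. -/
def IsNonarchAbs {K : Type*} [Field K] (abv : K → ℝ) : Prop :=
  (∀ a, 0 ≤ abv a) ∧ (∀ a, abv a = 0 ↔ a = 0) ∧
    (∀ a b, abv (a * b) = abv a * abv b) ∧ (∀ a b, abv (a + b) ≤ max (abv a) (abv b))

/-- The Gauss seminorm on `K[x_s : s ∈ S]` with weights `ρ : S → ℝ̄`: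
`δ(ρ)(f) = max_{α ∈ supp f} |c_α(f)| ∏_s exp(ρ_s)^{α_s}` (maximum over the empty set is `0`). -/
noncomputable def gaussSeminorm {K : Type*} [Field K] {S : Type*} (abv : K → ℝ) (ρ : S → Rbar)
    (f : MvPolynomial S K) : ℝ :=
  ((f.support.image fun α =>
      abv (MvPolynomial.coeff α f) * ∏ s ∈ α.support, expBar (ρ s) ^ α s).max).unbotD 0

/-- The index set `I(ij) = {{i,l}, {j,l} : l ≠ i,j}`: the variable `(false, l)` stands for
`u_{il}` and `(true, l)` for `u_{jl}`. -/
abbrev VarIJ (n : ℕ) (i j : Fin n) := Bool × {l : Fin n // l ≠ i ∧ l ≠ j}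

/-- The coordinate ring `R(ij)`: the polynomial ring over `K` in the `2(n−2)` variables
`u_q`, `q ∈ I(ij)`. -/
abbrev Rij (K : Type*) [Field K] (n : ℕ) (i j : Fin n) := MvPolynomial (VarIJ n i j) K

/-- The element `u_{kl} ∈ R(ij)` for a pair `{k,l} ≠ {i,j}` of distinct indices: the
variable `u_{kl}` when `{k,l}` meets `{i,j}`, and the Plücker binomial
`u_{ik} u_{jl} − u_{il} u_{jk}` when `k, l ∉ {i,j}` (junk value 0 in degenerate cases). -/
noncomputable def uPoly {K : Type*} [Field K] {n : ℕ} (i j : Fin n) (k l : Fin n) :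
    Rij K n i j :=
  if _ : k = i ∨ k = j then
    (if hl : l ≠ i ∧ l ≠ j then X (decide (k = j), ⟨l, hl⟩) else 0)
  else if _ : l = i ∨ l = j then
    (if hk : k ≠ i ∧ k ≠ j then X (decide (l = j), ⟨k, hk⟩) else 0)
  else if h : (k ≠ i ∧ k ≠ j) ∧ (l ≠ i ∧ l ≠ j) then
    X (false, ⟨k, h.1⟩) * X (true, ⟨l, h.2⟩) - X (false, ⟨l, h.2⟩) * X (true, ⟨k, h.1⟩)
  else 0

lemma expBar_bot : expBar ⊥ = 0 := rfl
lemma expBar_coe (r : ℝ) : expBar ↑r = Real.exp r := rfl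
lemma expBar_nonneg (a : Rbar) : 0 ≤ expBar a := by
  induction a using WithBot.recBotCoe with
  | bot => simp [expBar_bot]
  | coe r => exact (Real.exp_pos r).le
lemma expBar_add (a b : Rbar) : expBar (a + b) = expBar a * expBar b := by
  induction a using WithBot.recBotCoe with
  | bot => simp [expBar_bot]
  | coe r =>
    induction b using WithBot.recBotCoe with
    | bot => simp [expBar_bot]
    | coe s => rw [← WithBot.coe_add, expBar_coe, expBar_coe, expBar_coe, Real.exp_add]
lemma expBar_mono : Monotone expBar := by
  intro a b h
  induction a using WithBot.recBotCoe with
  | bot => exact expBar_nonneg b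
  | coe r =>
    induction b using WithBot.recBotCoe with
    | bot => exact absurd h (by simp)
    | coe s => exact Real.exp_le_exp.mpr (WithBot.coe_le_coe.mp h)
lemma expBar_max (a b : Rbar) : expBar (max a b) = max (expBar a) (expBar b) :=
  expBar_mono.map_max

lemma abv_one {K : Type*} [Field K] {abv : K → ℝ} (h : IsNonarchAbs abv) : abv 1 = 1 := by
  have h1 : abv 1 * abv 1 = abv 1 := by rw [← h.2.2.1, one_mul]
  have h0 : abv 1 ≠ 0 := fun hh => one_ne_zero ((h.2.1 1).mp hh)
  field_simp at h1
  tauto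

lemma abv_neg_one {K : Type*} [Field K] {abv : K → ℝ} (h : IsNonarchAbs abv) : abv (-1) = 1 := by
  have h1 : abv (-1) * abv (-1) = 1 := by rw [← h.2.2.1]; simpa using abv_one h
  rcases mul_self_eq_one_iff.mp h1 with h' | h'
  · exact h'
  · nlinarith [h.1 (-1 : K)]

lemma gauss_monomial {K S : Type*} [Field K] [DecidableEq S] (abv : K → ℝ) (ρ : S → Rbar)
    (m : S →₀ ℕ) (c : K) (hc : c ≠ 0) :
    gaussSeminorm abv ρ (monomial m c) = abv c * ∏ s ∈ m.support, expBar (ρ s) ^ m s := by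
  classical
  unfold gaussSeminorm
  rw [MvPolynomial.support_monomial, if_neg hc, Finset.image_singleton, Finset.max_singleton,
    coeff_monomial, if_pos rfl, WithBot.unbotD_coe]

lemma support_binom {K S : Type*} [Field K] [DecidableEq S] (m₁ m₂ : S →₀ ℕ) (h : m₁ ≠ m₂) :
    (monomial m₁ (1 : K) - monomial m₂ 1).support = {m₁, m₂} := by
  ext α
  simp only [mem_support_iff, coeff_sub, coeff_monomial, Finset.mem_insert, Finset.mem_singleton]
  by_cases h1 : m₁ = α <;> by_cases h2 : m₂ = α <;> simp_all <;> tauto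

lemma gauss_binom {K S : Type*} [Field K] [DecidableEq S] {abv : K → ℝ} (habv : IsNonarchAbs abv)
    (ρ : S → Rbar) (m₁ m₂ : S →₀ ℕ) (h : m₁ ≠ m₂) :
    gaussSeminorm abv ρ (monomial m₁ (1 : K) - monomial m₂ 1)
      = max (∏ s ∈ m₁.support, expBar (ρ s) ^ m₁ s) (∏ s ∈ m₂.support, expBar (ρ s) ^ m₂ s) := by
  unfold gaussSeminorm
  rw [support_binom m₁ m₂ h, Finset.image_insert, Finset.image_singleton]
  have c1 : MvPolynomial.coeff m₁ (monomial m₁ (1 : K) - monomial m₂ 1) = 1 := by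
    simp [coeff_monomial, Ne.symm h]
  have c2 : MvPolynomial.coeff m₂ (monomial m₁ (1 : K) - monomial m₂ 1) = -1 := by
    simp [coeff_monomial, h]
  rw [c1, c2, abv_one habv, abv_neg_one habv, one_mul, one_mul, Finset.max_insert,
    Finset.max_singleton, ← WithBot.coe_max, WithBot.unbotD_coe]

lemma prod_pair {S : Type*} [DecidableEq S] (g : S → ℝ) (a b : S) :
    ∏ s ∈ (Finsupp.single a 1 + Finsupp.single b 1).support,
        g s ^ ((Finsupp.single a 1 + Finsupp.single b 1 : S →₀ ℕ) s) = g a * g b := by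
  change (Finsupp.single a 1 + Finsupp.single b 1 : S →₀ ℕ).prod (fun s e => g s ^ e) = _
  rw [Finsupp.prod_add_index' (fun _ => pow_zero _) (fun _ _ _ => pow_add _ _ _),
    Finsupp.prod_single_index (h := fun s e => g s ^ e) (pow_zero _),
    Finsupp.prod_single_index (h := fun s e => g s ^ e) (pow_zero _), pow_one, pow_one]

lemma prod_single {S : Type*} [DecidableEq S] (g : S → ℝ) (a : S) :
    ∏ s ∈ (Finsupp.single a 1 : S →₀ ℕ).support, g s ^ ((Finsupp.single a 1 : S →₀ ℕ) s)
      = g a := by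
  change (Finsupp.single a 1 : S →₀ ℕ).prod (fun s e => g s ^ e) = _
  rw [Finsupp.prod_single_index (h := fun s e => g s ^ e) (pow_zero _), pow_one]

lemma gauss_X {K S : Type*} [Field K] [DecidableEq S] {abv : K → ℝ} (habv : IsNonarchAbs abv)
    (ρ : S → Rbar) (v : S) :
    gaussSeminorm abv ρ (X v) = expBar (ρ v) := by
  rw [X, gauss_monomial abv ρ _ _ one_ne_zero, abv_one habv, one_mul, prod_single]

/-- let `x : Pairs(n) → ℝ̄` with `x_{ij} ≠ −∞` satisfy the caterpillar
conditions `max(x_{ik} + x_{jl}, x_{il} + x_{jk}) = x_{ij} + x_{kl}` for all distinct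
`k, l ∉ {i,j}`. Then the Gauss seminorm `δ` on `R(ij)` with weights `x_q − x_{ij}`
(`q ∈ I(ij)`) satisfies `δ(u_q) = exp(x_q − x_{ij})` for every pair `q ≠ {i,j}`; in
particular it is a section of the tropicalization map over the cone of the caterpillar
tree with endpoint leaves `i` and `j`. -/
theorem gauss_is_section_caterpillar {K : Type*} [Field K] (abv : K → ℝ)
    (habv : IsNonarchAbs abv) {n : ℕ} (hn : 4 ≤ n) (i j : Fin n) (hij : i ≠ j)
    (x : Sym2 (Fin n) → Rbar) (hx : x s(i, j) ≠ ⊥)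
    (hcat : ∀ k l : Fin n, k ≠ l → k ≠ i → k ≠ j → l ≠ i → l ≠ j →
      max (x s(i, k) + x s(j, l)) (x s(i, l) + x s(j, k)) = x s(i, j) + x s(k, l)) :
    ∀ k l : Fin n, k ≠ l → s(k, l) ≠ s(i, j) →
      gaussSeminorm abv
          (fun v : VarIJ n i j =>
            x s((if v.1 then j else i), v.2.1) + ((-(x s(i, j)).unbotD 0 : ℝ) : Rbar))
          (uPoly i j k l)
        = expBar (x s(k, l) + ((-(x s(i, j)).unbotD 0 : ℝ) : Rbar)) := by
  intro k l hkl hklij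
  obtain ⟨r, hr⟩ := WithBot.ne_bot_iff_exists.mp hx
  have hur : (x s(i, j)).unbotD 0 = r := by rw [← hr, WithBot.unbotD_coe]
  set ρ : VarIJ n i j → Rbar := fun v =>
    x s((if v.1 then j else i), v.2.1) + ((-(x s(i, j)).unbotD 0 : ℝ) : Rbar) with hρ
  by_cases hki : k = i
  · have hlj : l ≠ j := fun h => hklij (by rw [hki, h])
    have hl : l ≠ i ∧ l ≠ j := ⟨fun h => hkl (by rw [hki, h]), hlj⟩
    rw [hki, uPoly, dif_pos (Or.inl rfl), dif_pos hl, gauss_X habv, hρ]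
    simp [decide_eq_false hij]
  · by_cases hkj : k = j
    · have hli : l ≠ i := fun h => hklij (by rw [hkj, h]; exact Sym2.eq_swap)
      have hl : l ≠ i ∧ l ≠ j := ⟨hli, fun h => hkl (by rw [hkj, h])⟩
      rw [hkj, uPoly, dif_pos (Or.inr rfl), dif_pos hl, gauss_X habv, hρ]
      simp
    · by_cases hli : l = i
      · have hk : k ≠ i ∧ k ≠ j := ⟨hki, hkj⟩
        rw [hli, uPoly, dif_neg (by tauto), dif_pos (Or.inl rfl), dif_pos hk, gauss_X habv, hρ]
        rw [show s(k, i) = s(i, k) from Sym2.eq_swap]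
        simp [decide_eq_false hij]
      · by_cases hlj : l = j
        · have hk : k ≠ i ∧ k ≠ j := ⟨hki, hkj⟩
          rw [hlj, uPoly, dif_neg (by tauto), dif_pos (Or.inr rfl), dif_pos hk, gauss_X habv, hρ]
          rw [show s(k, j) = s(j, k) from Sym2.eq_swap]
          simp
        · -- binomial case
          have hcond : (k ≠ i ∧ k ≠ j) ∧ (l ≠ i ∧ l ≠ j) := ⟨⟨hki, hkj⟩, ⟨hli, hlj⟩⟩
          rw [uPoly, dif_neg (by tauto), dif_neg (by tauto), dif_pos hcond]
          set a : VarIJ n i j := (false, ⟨k, hcond.1⟩)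
          set b : VarIJ n i j := (true, ⟨l, hcond.2⟩)
          set c : VarIJ n i j := (false, ⟨l, hcond.2⟩)
          set d : VarIJ n i j := (true, ⟨k, hcond.1⟩)
          have hXab : (X a * X b : Rij K n i j)
              = monomial (Finsupp.single a 1 + Finsupp.single b 1) 1 := by
            rw [X, X, monomial_mul, one_mul]
          have hXcd : (X c * X d : Rij K n i j)
              = monomial (Finsupp.single c 1 + Finsupp.single d 1) 1 := by
            rw [X, X, monomial_mul, one_mul]
          have hm : (Finsupp.single a 1 + Finsupp.single b 1 : VarIJ n i j →₀ ℕ)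
              ≠ Finsupp.single c 1 + Finsupp.single d 1 := by
            intro heq
            have h2 := DFunLike.congr_fun heq a
            simp [a, b, c, d, Finsupp.single_apply, Prod.ext_iff, Subtype.ext_iff,
              hkl, Ne.symm hkl] at h2
          rw [hXab, hXcd, gauss_binom habv ρ _ _ hm, prod_pair, prod_pair]
          have hρa : ρ a = x s(i, k) + ((-r : ℝ) : Rbar) := by simp [hρ, a, hur]
          have hρb : ρ b = x s(j, l) + ((-r : ℝ) : Rbar) := by simp [hρ, b, hur]
          have hρc : ρ c = x s(i, l) + ((-r : ℝ) : Rbar) := by simp [hρ, c, hur]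
          have hρd : ρ d = x s(j, k) + ((-r : ℝ) : Rbar) := by simp [hρ, d, hur]
          rw [hρa, hρb, hρc, hρd, hur]
          simp only [expBar_add, expBar_coe]
          set A := expBar (x s(i, k))
          set B := expBar (x s(j, l))
          set C := expBar (x s(i, l))
          set D := expBar (x s(j, k))
          set E := expBar (x s(k, l))
          set e := Real.exp (-r)
          have key : max (A * B) (C * D) = Real.exp r * E := by
            have h := congrArg expBar
              (hcat k l hkl hcond.1.1 hcond.1.2 hcond.2.1 hcond.2.2)
            rw [expBar_max, expBar_add, expBar_add, expBar_add, ← hr, expBar_coe] at h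
            exact h
          have he : Real.exp r * e = 1 := by
            rw [show e = Real.exp (-r) from rfl, ← Real.exp_add, add_neg_cancel, Real.exp_zero]
          have hee : (0 : ℝ) ≤ e * e := by positivity
          rw [show A * e * (B * e) = A * B * (e * e) by ring,
            show C * e * (D * e) = C * D * (e * e) by ring,
            ← max_mul_of_nonneg _ _ hee, key,
            show Real.exp r * E * (e * e) = (Real.exp r * e) * (E * e) by ring, he, one_mul]
end

section
/- Let T be a finite tree (a finite connected acyclic simple graph) with no vertex of degree 2, let d denote the graph (combinatorial) distance in T, and let i, j be two distinct leaves (degree-1 vertices) of T. Then there exists a partial order ≼ on the set of leaves of T other than i and j such that: (a) two such leaves k, l are comparable under ≼ (i.e. k ≼ l or l ≼ k) if and only if d(i,k) − d(j,k) = d(i,l) − d(j,l) (equivalently, k and l attach to the same vertex of the path from i to j, i.e. they lie in the same subtree hanging off that path); and (b) for all leaves k, l, v with k ≺ l ≺ v strictly, either d(i,v)+d(k,l) ≤ d(i,k)+d(l,v) and d(i,v)+d(k,l) ≤ d(i,l)+d(k,v) (i.e. {k,l} is a cherry of the quartet {i,k,l,v}), or d(i,k)+d(l,v) ≤ d(i,l)+d(k,v)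 and d(i,k)+d(l,v) ≤ d(i,v)+d(k,l) (i.e. {l,v} is a cherry of the quartet {i,k,l,v}). Such a partial order is said to have the cherry property on T with respect to i and j. -/
open SimpleGraph Walk

namespace CherryAux

/-- length of common prefix -/
def cpl {α : Type*} [DecidableEq α] : List α → List α → ℕ
  | a :: as, b :: bs => if a = b then cpl as bs + 1 else 0
  | _, _ => 0

lemma cpl_nil {α : Type*} [DecidableEq α] (l : List α) : cpl ([] : List α) l = 0 := by
  cases l <;> rfl

lemma cpl_nil' {α : Type*} [DecidableEq α] (l : List α) : cpl l ([] : List α) = 0 := by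
  cases l <;> rfl

lemma cpl_cons {α : Type*} [DecidableEq α] (a b : α) (as bs : List α) :
    cpl (a :: as) (b :: bs) = if a = b then cpl as bs + 1 else 0 := rfl

lemma cpl_lex {α : Type*} [DecidableEq α] [LinearOrder α] :
    ∀ {a b c : List α}, List.Lex (· < ·) a b → List.Lex (· < ·) b c →
      cpl a c = min (cpl a b) (cpl b c) := by
  intro a
  induction a with
  | nil =>
    intro b c _ _
    simp [cpl_nil]
  | cons x as ih =>
    intro b c hab hbc
    cases hab with
    | cons h1 =>
      cases hbc with
      | cons h2 =>
        simp [cpl_cons, ih h1 h2]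
      | rel h2 =>
        simp [cpl_cons, h2.ne]
    | rel h1 =>
      cases hbc with
      | cons h2 =>
        simp [cpl_cons, h1.ne]
      | rel h2 =>
        simp [cpl_cons, h1.ne, (h1.trans h2).ne]

variable {V : Type} {G : SimpleGraph V} [DecidableEq V]

lemma path_length_eq_dist (hconn : G.Connected) (hacyc : G.IsAcyclic)
    {u v : V} (p : G.Walk u v) (hp : p.IsPath) : p.length = G.dist u v := by
  obtain ⟨w, hw⟩ := hconn.exists_walk_length_eq_dist u v
  have h1 : p = w.bypass :=
    congrArg Subtype.val (hacyc.path_unique ⟨p, hp⟩ ⟨w.bypass, w.bypass_isPath⟩)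
  refine le_antisymm ?_ (SimpleGraph.dist_le p)
  rw [h1, ← hw]
  exact Walk.length_bypass_le w

lemma takeUntil_cons' {u a x z : V} (h : G.Adj u a) (p : G.Walk a x)
    (hz : z ∈ (Walk.cons h p).support) (hzu : u ≠ z) :
    (Walk.cons h p).takeUntil z hz =
      Walk.cons h (p.takeUntil z (by
        rw [Walk.support_cons] at hz
        rcases List.mem_cons.mp hz with h' | h'
        · exact absurd h'.symm hzu
        · exact h')) := by
  simp [Walk.takeUntil, hzu]

lemma diverge_support (hacyc : G.IsAcyclic) {u x y a b : V}
    (ha : G.Adj u a) (hb : G.Adj u b) (hab : a ≠ b)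
    {p : G.Walk a x} {q : G.Walk b y}
    (hp : (Walk.cons ha p).IsPath) (hq : (Walk.cons hb q).IsPath)
    {z : V} (hzp : z ∈ (Walk.cons ha p).support) (hzq : z ∈ (Walk.cons hb q).support) :
    z = u := by
  by_contra hzu
  have e : (Walk.cons ha p).takeUntil z hzp = (Walk.cons hb q).takeUntil z hzq :=
    congrArg Subtype.val (hacyc.path_unique ⟨_, hp.takeUntil hzp⟩ ⟨_, hq.takeUntil hzq⟩)
  rw [takeUntil_cons' ha p hzp (fun h => hzu h.symm),
      takeUntil_cons' hb q hzq (fun h => hzu h.symm)] at e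
  have hab' := congrArg (fun w => w.getVert 1) e
  simp only [Walk.getVert_cons_succ, Walk.getVert_zero] at hab'
  exact hab hab'

lemma key (hconn : G.Connected) (hacyc : G.IsAcyclic) :
    ∀ {u x y : V} (p : G.Walk u x) (q : G.Walk u y), p.IsPath → q.IsPath →
      G.dist x y + 2 * cpl p.support q.support = p.length + q.length + 2 := by
  intro u x y p
  induction p with
  | nil =>
    intro q _ hq
    rw [Walk.support_nil, q.support_eq_cons, cpl_cons, if_pos rfl, cpl_nil]
    simp [cpl_cons, cpl_nil, ← path_length_eq_dist hconn hacyc q hq]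
  | @cons u' a' x' h p' ih =>
    intro q hp hq
    cases q with
    | nil =>
      rw [Walk.support_nil, (Walk.cons h p').support_eq_cons]
      have hrev : (Walk.cons h p').reverse.length = G.dist x' y :=
        path_length_eq_dist hconn hacyc _ hp.reverse
      simp only [Walk.length_reverse] at hrev
      simp [cpl_cons, cpl_nil', ← hrev]
    | cons h' q' =>
      rename_i b'
      rw [Walk.support_cons, Walk.support_cons, cpl_cons, if_pos rfl]
      by_cases hab : a' = b'
      · subst hab
        have := ih q' hp.of_cons hq.of_cons
        simp only [Walk.length_cons]
        omega
      · have hc0 : cpl p'.support q'.support = 0 := by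
          rw [p'.support_eq_cons, q'.support_eq_cons, cpl_cons, if_neg hab]
        have hW : ((Walk.cons h p').reverse.append (Walk.cons h' q')).IsPath := by
          rw [Walk.isPath_def]
          simp only [Walk.support_append, Walk.support_reverse, Walk.support_cons,
            List.tail_cons]
          refine List.Nodup.append (List.nodup_reverse.mpr ?_) hq.of_cons.support_nodup ?_
          · have := hp.support_nodup; rwa [Walk.support_cons] at this
          intro z hz1 hz2
          rw [List.mem_reverse] at hz1
          have hz1' : z ∈ (Walk.cons h p').support := by rw [Walk.support_cons]; exact hz1
          have hz2' : z ∈ (Walk.cons h' q').support := by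
            rw [Walk.support_cons]; exact List.mem_cons_of_mem _ hz2
          have hzz := diverge_support hacyc h h' hab hp hq hz1' hz2'
          rw [hzz] at hz2
          have hu : u' ∉ q'.support := by
            have := hq.support_nodup
            rw [Walk.support_cons] at this
            exact (List.nodup_cons.mp this).1
          exact hu hz2
        have hlen := path_length_eq_dist hconn hacyc _ hW
        simp at hlen
        simp only [Walk.length_cons]
        omega

end CherryAux

/-- let `T` be a finite tree with no degree-2 vertex, and `i ≠ j` two
leaves. Then there is a partial order `≼` on the remaining leaves such that:
(a) `k` and `l` are comparable iff `d(i,k) − d(j,k) = d(i,l) − d(j,l)` (they hang off the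
same vertex of the path from `i` to `j`); and
(b) whenever `k ≺ l ≺ v` strictly, either `{k,l}` or `{l,v}` is a cherry of the quartet
`{i,k,l,v}`. Such an order is said to have the cherry property on `T` w.r.t. `i,j`. -/
theorem exists_partialOrder_with_cherry_property (V : Type) [Fintype V] (G : SimpleGraph V)
    (hconn : G.Connected) (hacyc : G.IsAcyclic)
    (hdeg2 : ∀ v : V, (G.neighborSet v).ncard ≠ 2)
    (i j : V) (hij : i ≠ j)
    (hi : (G.neighborSet i).ncard = 1) (hj : (G.neighborSet j).ncard = 1) :
    ∃ r : {v : V // (G.neighborSet v).ncard = 1 ∧ v ≠ i ∧ v ≠ j} →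
          {v : V // (G.neighborSet v).ncard = 1 ∧ v ≠ i ∧ v ≠ j} → Prop,
      IsPartialOrder _ r ∧
      (∀ k l, (r k l ∨ r l k) ↔
        (G.dist i k.1 : ℤ) - (G.dist j k.1 : ℤ) = (G.dist i l.1 : ℤ) - (G.dist j l.1 : ℤ)) ∧
      (∀ k l v, r k l → k ≠ l → r l v → l ≠ v →
        ((G.dist i v.1 + G.dist k.1 l.1 ≤ G.dist i k.1 + G.dist l.1 v.1 ∧
          G.dist i v.1 + G.dist k.1 l.1 ≤ G.dist i l.1 + G.dist k.1 v.1) ∨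
         (G.dist i k.1 + G.dist l.1 v.1 ≤ G.dist i l.1 + G.dist k.1 v.1 ∧
          G.dist i k.1 + G.dist l.1 v.1 ≤ G.dist i v.1 + G.dist k.1 l.1))) := by
  letI : LinearOrder V := LinearOrder.lift' (Fintype.equivFin V) (Fintype.equivFin V).injective
  have hpath : ∀ x : V, ∃ p : G.Walk i x, p.IsPath := fun x =>
    (hconn.preconnected i x).elim fun w => ⟨w.bypass, w.bypass_isPath⟩
  choose P hP using hpath
  set S : V → List V := fun x => (P x).support with hS
  have hL : ∀ x : V, (P x).length = G.dist i x := fun x =>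
    CherryAux.path_length_eq_dist hconn hacyc _ (hP x)
  have hkey : ∀ x y : V,
      G.dist x y + 2 * CherryAux.cpl (S x) (S y) = G.dist i x + G.dist i y + 2 := by
    intro x y
    have := CherryAux.key hconn hacyc (P x) (P y) (hP x) (hP y)
    rwa [hL, hL] at this
  have Sinj : ∀ x y : V, S x = S y → x = y := by
    intro x y h
    have e1 : (S x).getLast? = some x := by
      simp [hS, List.getLast?_eq_getLast]
    have e2 : (S y).getLast? = some y := by
      simp [hS, List.getLast?_eq_getLast]
    rw [h, e2] at e1
    exact (Option.some_injective _ e1).symm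
  refine ⟨fun k l => k = l ∨
      (((G.dist i k.1 : ℤ) - G.dist j k.1 = (G.dist i l.1 : ℤ) - G.dist j l.1) ∧
        List.Lex (· < ·) (S k.1) (S l.1)),
    { refl := fun k => Or.inl rfl, trans := ?_, antisymm := ?_ }, ?_, ?_⟩
  · -- trans
    rintro k l m (rfl | ⟨hf1, hx1⟩) h2
    · exact h2
    · rcases h2 with rfl | ⟨hf2, hx2⟩
      · exact Or.inr ⟨hf1, hx1⟩
      · exact Or.inr ⟨hf1.trans hf2, List.lex_trans (fun h1 h2 => lt_trans h1 h2) hx1 hx2⟩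
  · -- antisymm
    rintro k l (rfl | ⟨hf1, hx1⟩) h2
    · rfl
    · rcases h2 with rfl | ⟨hf2, hx2⟩
      · rfl
      · exact absurd hx2 (asymm hx1)
  · -- comparability
    intro k l
    constructor
    · rintro ((rfl | ⟨hf, _⟩) | (rfl | ⟨hf, _⟩))
      · rfl
      · exact hf
      · rfl
      · exact hf.symm
    · intro hf
      by_cases hkl : k = l
      · exact Or.inl (Or.inl hkl)
      · have hne : S k.1 ≠ S l.1 := fun h =>
          hkl (Subtype.ext (Sinj _ _ h))
        have htri := trichotomous_of (r := List.Lex (α := V) (· < ·))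
        rcases htri (S k.1) (S l.1) with h | h | h
        · exact Or.inl (Or.inr ⟨hf, h⟩)
        · exact absurd h hne
        · exact Or.inr (Or.inr ⟨hf.symm, h⟩)
  · -- cherry property
    intro k l v hkl hkl' hlv hlv'
    rcases hkl with rfl | ⟨_, hx1⟩
    · exact absurd rfl hkl'
    rcases hlv with rfl | ⟨_, hx2⟩
    · exact absurd rfl hlv'
    have hmin := CherryAux.cpl_lex hx1 hx2
    have k1 := hkey k.1 l.1
    have k2 := hkey l.1 v.1
    have k3 := hkey k.1 v.1
    rw [hmin] at k3
    rcases le_total (CherryAux.cpl (S k.1) (S l.1)) (CherryAux.cpl (S l.1) (S v.1)) with h | h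
    · rw [min_eq_left h] at k3
      omega
    · rw [min_eq_right h] at k3
      omega
end

section
/- Fix a field K, an integer n ≥ 2, distinct i, j ∈ {1,…,n}, and a set J ⊆ Pairs(n) with {i,j} ∉ J. Then the following are equivalent: (a) there exist a field extension L of K and a 2×n matrix X with entries in L such that, for every pair {k,l} ∈ Pairs(n), the 2×2 minor of X on columns k and l vanishes if and only if {k,l} ∈ J (in particular the minor on columns i and j is nonzero, so X has rank 2); (b) J is saturated with respect to i and j. In other words, the torus stratum Gr_J(2,n) of the Grassmannian, consisting of the points whose vanishing Plücker coordinates are exactly those indexed by J, is nonempty if and only if J is saturated. -/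
/-- `J` is saturated with respect to the distinct indices `i, j`:
(i) for pairwise distinct `k, l, m` with `{k,m} ≠ {i,j}`, if `{k,l} ∈ J` and `{l,m} ∈ J`,
then `{k,m} ∈ J` or both `{i,l} ∈ J` and `{j,l} ∈ J`;
(ii) if `{i,k} ∈ J` and `{j,k} ∈ J`, then `{k,l} ∈ J` for all `l ≠ k`. -/
def Saturated {n : ℕ} (i j : Fin n) (J : Set (Sym2 (Fin n))) : Prop :=
  (∀ k l m : Fin n, k ≠ l → l ≠ m → k ≠ m → s(k, m) ≠ s(i, j) →
      s(k, l) ∈ J → s(l, m) ∈ J → (s(k, m) ∈ J ∨ (s(i, l) ∈ J ∧ s(j, l) ∈ J))) ∧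
  (∀ k : Fin n, k ≠ i → k ≠ j → s(i, k) ∈ J → s(j, k) ∈ J → ∀ l : Fin n, l ≠ k → s(k, l) ∈ J)

lemma memJ_swap {n : ℕ} {J : Set (Sym2 (Fin n))} {a b : Fin n} (h : s(a,b) ∈ J) : s(b,a) ∈ J := by
  rwa [Sym2.eq_swap] at h

lemma sat_symm {n : ℕ} {i j : Fin n} {J : Set (Sym2 (Fin n))} (h : Saturated i j J) :
    Saturated j i J := by
  obtain ⟨h1, h2⟩ := h
  constructor
  · intro k l m hkl hlm hkm hne hk hl
    have hne' : s(k,m) ≠ s(i,j) := fun hh => hne (hh.trans Sym2.eq_swap)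
    rcases h1 k l m hkl hlm hkm hne' hk hl with h | ⟨ha, hb⟩
    · exact Or.inl h
    · exact Or.inr ⟨hb, ha⟩
  · intro k hkj hki hjk hik l hlk
    exact h2 k hki hkj hik hjk l hlk

noncomputable def strS {n : ℕ} (i j : Fin n) (J : Set (Sym2 (Fin n))) (k : Fin n) : Finset (Fin n) :=
  insert k (@Finset.filter _ (fun l => s(k,l) ∈ J ∧ ¬(s(i,l) ∈ J ∧ s(j,l) ∈ J))
    (fun _ => Classical.propDecidable _) Finset.univ)

lemma mem_strS {n : ℕ} {i j : Fin n} {J : Set (Sym2 (Fin n))} {k m : Fin n} :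
    m ∈ strS i j J k ↔ m = k ∨ (s(k,m) ∈ J ∧ ¬(s(i,m) ∈ J ∧ s(j,m) ∈ J)) := by
  unfold strS
  simp only [Finset.mem_insert, Finset.mem_filter, Finset.mem_univ, true_and]

lemma strS_nonempty {n : ℕ} {i j : Fin n} {J : Set (Sym2 (Fin n))} {k : Fin n} :
    (strS i j J k).Nonempty := ⟨k, mem_strS.mpr (Or.inl rfl)⟩

noncomputable def strIdx {n : ℕ} (i j : Fin n) (J : Set (Sym2 (Fin n))) (k : Fin n) : ℕ :=
  ((strS i j J k).min' strS_nonempty : Fin n).val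

lemma powinj (K : Type) [Field K] (a b : ℕ) (h : (RatFunc.X : RatFunc K)^a = RatFunc.X ^ b) :
    a = b := by
  rw [← RatFunc.algebraMap_X (K := K), ← map_pow, ← map_pow] at h
  have := RatFunc.algebraMap_injective K h
  simpa using congrArg Polynomial.natDegree this

lemma satZ {n : ℕ} {i j : Fin n} {J : Set (Sym2 (Fin n))} (hJ : s(i,j) ∉ J)
    (hsat : Saturated i j J) :
    ∀ k : Fin n, s(i,k) ∈ J ∧ s(j,k) ∈ J → ∀ l, l ≠ k → s(k,l) ∈ J := by
  intro k hk l hlk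
  have hki : k ≠ i := by rintro rfl; exact hJ (memJ_swap hk.2)
  have hkj : k ≠ j := by rintro rfl; exact hJ hk.1
  exact hsat.2 k hki hkj hk.1 hk.2 l hlk

lemma satII {n : ℕ} {i j : Fin n} {J : Set (Sym2 (Fin n))} (hij : i ≠ j) (hJ : s(i,j) ∉ J)
    (hsat : Saturated i j J) :
    ∀ k l : Fin n, k ≠ l → ¬(s(i,k) ∈ J ∧ s(j,k) ∈ J) → ¬(s(i,l) ∈ J ∧ s(j,l) ∈ J) →
      (k = i ∨ s(i,k) ∈ J) → (l = i ∨ s(i,l) ∈ J) → s(k,l) ∈ J := by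
  intro k l hkl hZk hZl hk hl
  by_cases hki : k = i
  · subst hki
    rcases hl with rfl | hl
    · exact absurd rfl hkl
    · exact hl
  · replace hk : s(i,k) ∈ J := hk.resolve_left hki
    by_cases hli : l = i
    · subst hli; exact memJ_swap hk
    · replace hl : s(i,l) ∈ J := hl.resolve_left hli
      have hkj : k ≠ j := by rintro rfl; exact hJ hk
      have hlj : l ≠ j := by rintro rfl; exact hJ hl
      have hne : s(k,l) ≠ s(i,j) := by
        intro h
        rcases Sym2.eq_iff.1 h with ⟨h1', h2'⟩ | ⟨h1', h2'⟩
        · exact hki h1'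
        · exact hkj h1'
      rcases hsat.1 k i l hki (fun h => hli h.symm) hkl hne (memJ_swap hk) hl with h | ⟨_, hb⟩
      · exact h
      · exact absurd (memJ_swap hb) hJ

lemma satIJ {n : ℕ} {i j : Fin n} {J : Set (Sym2 (Fin n))} (hij : i ≠ j) (hJ : s(i,j) ∉ J)
    (hsat : Saturated i j J) :
    ∀ k l : Fin n, k ≠ l → ¬(s(i,k) ∈ J ∧ s(j,k) ∈ J) → ¬(s(i,l) ∈ J ∧ s(j,l) ∈ J) →
      (k = i ∨ s(i,k) ∈ J) → (l = j ∨ s(j,l) ∈ J) → s(k,l) ∉ J := by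
  intro k l hkl hZk hZl hk hl hmem
  by_cases hki : k = i
  · subst hki
    by_cases hlj : l = j
    · subst hlj; exact hJ hmem
    · exact hZl ⟨hmem, hl.resolve_left hlj⟩
  · replace hk : s(i,k) ∈ J := hk.resolve_left hki
    by_cases hlj : l = j
    · subst hlj; exact hZk ⟨hk, memJ_swap hmem⟩
    · replace hl : s(j,l) ∈ J := hl.resolve_left hlj
      have hli : l ≠ i := by rintro rfl; exact hJ (memJ_swap hl)
      have hne : s(i,l) ≠ s(i,j) := by
        intro h
        rcases Sym2.eq_iff.1 h with ⟨h1', h2'⟩ | ⟨h1', h2'⟩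
        · exact hlj h2'
        · exact hij h1'
      rcases hsat.1 i k l (fun h => hki h.symm) hkl (fun h => hli h.symm) hne hk hmem with h | hZ
      · exact hZl ⟨h, hl⟩
      · exact hZk hZ

lemma satIE {n : ℕ} {i j : Fin n} {J : Set (Sym2 (Fin n))} (hij : i ≠ j) (hJ : s(i,j) ∉ J)
    (hsat : Saturated i j J) :
    ∀ k l : Fin n, k ≠ l → ¬(s(i,k) ∈ J ∧ s(j,k) ∈ J) → ¬(s(i,l) ∈ J ∧ s(j,l) ∈ J) →
      (k = i ∨ s(i,k) ∈ J) → ¬(l = i ∨ s(i,l) ∈ J) → ¬(l = j ∨ s(j,l) ∈ J) → s(k,l) ∉ J := by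
  intro k l hkl hZk hZl hk hIl hJl hmem
  have hli : l ≠ i := fun h => hIl (Or.inl h)
  have hlj : l ≠ j := fun h => hJl (Or.inl h)
  by_cases hki : k = i
  · subst hki; exact hIl (Or.inr hmem)
  · replace hk : s(i,k) ∈ J := hk.resolve_left hki
    have hne : s(i,l) ≠ s(i,j) := by
      intro h
      rcases Sym2.eq_iff.1 h with ⟨h1', h2'⟩ | ⟨h1', h2'⟩
      · exact hlj h2'
      · exact hij h1'
    rcases hsat.1 i k l (fun h => hki h.symm) hkl (fun h => hli h.symm) hne hk hmem with h | hZ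
    · exact hIl (Or.inr h)
    · exact hZk hZ

lemma strS_subset {n : ℕ} {i j : Fin n} {J : Set (Sym2 (Fin n))} (hij : i ≠ j) (hJ : s(i,j) ∉ J)
    (hsat : Saturated i j J) :
    ∀ k l : Fin n, k ≠ l →
      ¬(s(i,k) ∈ J ∧ s(j,k) ∈ J) → ¬(k = i ∨ s(i,k) ∈ J) → ¬(k = j ∨ s(j,k) ∈ J) →
      ¬(s(i,l) ∈ J ∧ s(j,l) ∈ J) → ¬(l = i ∨ s(i,l) ∈ J) → ¬(l = j ∨ s(j,l) ∈ J) →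
      s(k,l) ∈ J → strS i j J k ⊆ strS i j J l := by
  intro k l hkl hZk hIk hJk hZl hIl hJl hmem m hm
  rw [mem_strS] at hm ⊢
  have hli : l ≠ i := fun h => hIl (Or.inl h)
  have hlj : l ≠ j := fun h => hJl (Or.inl h)
  rcases hm with rfl | ⟨hkm, hZm⟩
  · exact Or.inr ⟨memJ_swap hmem, hZk⟩
  · by_cases hmk : m = k
    · subst hmk; exact Or.inr ⟨memJ_swap hmem, hZk⟩
    · by_cases hml : m = l
      · exact Or.inl hml
      · refine Or.inr ⟨?_, hZm⟩
        have hne : s(m,l) ≠ s(i,j) := by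
          intro h
          rcases Sym2.eq_iff.1 h with ⟨h1', h2'⟩ | ⟨h1', h2'⟩
          · exact hlj h2'
          · exact hli h2'
        rcases hsat.1 m k l hmk hkl hml hne (memJ_swap hkm) hmem with h | hZ
        · exact memJ_swap h
        · exact absurd hZ hZk

lemma min'_congr' {n : ℕ} (s t : Finset (Fin n)) (hs : s.Nonempty) (ht : t.Nonempty)
    (h : s = t) : s.min' hs = t.min' ht := by subst h; rfl

lemma strIdx_eq {n : ℕ} {i j : Fin n} {J : Set (Sym2 (Fin n))} (hij : i ≠ j) (hJ : s(i,j) ∉ J)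
    (hsat : Saturated i j J) :
    ∀ k l : Fin n, k ≠ l →
      ¬(s(i,k) ∈ J ∧ s(j,k) ∈ J) → ¬(k = i ∨ s(i,k) ∈ J) → ¬(k = j ∨ s(j,k) ∈ J) →
      ¬(s(i,l) ∈ J ∧ s(j,l) ∈ J) → ¬(l = i ∨ s(i,l) ∈ J) → ¬(l = j ∨ s(j,l) ∈ J) →
      s(k,l) ∈ J → strIdx i j J k = strIdx i j J l := by
  intro k l hkl hZk hIk hJk hZl hIl hJl hmem
  have h : strS i j J k = strS i j J l :=
    Finset.Subset.antisymm (strS_subset hij hJ hsat k l hkl hZk hIk hJk hZl hIl hJl hmem)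
      (strS_subset hij hJ hsat l k hkl.symm hZl hIl hJl hZk hIk hJk (memJ_swap hmem))
  unfold strIdx
  rw [min'_congr' _ _ strS_nonempty strS_nonempty h]

lemma satEE_of_idx {n : ℕ} {i j : Fin n} {J : Set (Sym2 (Fin n))} (hij : i ≠ j) (hJ : s(i,j) ∉ J)
    (hsat : Saturated i j J) :
    ∀ k l : Fin n, k ≠ l →
      ¬(s(i,k) ∈ J ∧ s(j,k) ∈ J) → ¬(k = i ∨ s(i,k) ∈ J) → ¬(k = j ∨ s(j,k) ∈ J) →
      ¬(s(i,l) ∈ J ∧ s(j,l) ∈ J) → ¬(l = i ∨ s(i,l) ∈ J) → ¬(l = j ∨ s(j,l) ∈ J) →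
      strIdx i j J k = strIdx i j J l → s(k,l) ∈ J := by
  intro k l hkl hZk hIk hJk hZl hIl hJl hmin
  unfold strIdx at hmin
  have hmin' : (strS i j J k).min' strS_nonempty = (strS i j J l).min' strS_nonempty :=
    Fin.val_injective hmin
  have hmk : (strS i j J k).min' strS_nonempty ∈ strS i j J k := Finset.min'_mem _ _
  have hml : (strS i j J k).min' strS_nonempty ∈ strS i j J l := by
    rw [hmin']; exact Finset.min'_mem _ _
  set m := (strS i j J k).min' strS_nonempty with hm
  rw [mem_strS] at hmk hml
  by_cases h1k : m = k
  · rw [h1k] at hml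
    rcases hml with h | ⟨h, -⟩
    · exact absurd h hkl
    · exact memJ_swap h
  · by_cases h1l : m = l
    · rw [h1l] at hmk
      rcases hmk with h | ⟨h, -⟩
      · exact absurd h.symm hkl
      · exact h
    · rcases hmk with h | ⟨hkm, hZm⟩
      · exact absurd h h1k
      rcases hml with h | ⟨hlm, -⟩
      · exact absurd h h1l
      have hne : s(k,l) ≠ s(i,j) := by
        intro h
        rcases Sym2.eq_iff.1 h with ⟨h1', h2'⟩ | ⟨h1', h2'⟩
        · exact hIk (Or.inl h1')
        · exact hJk (Or.inl h1')
      rcases hsat.1 k m l (fun h => h1k h.symm) h1l hkl hne hkm (memJ_swap hlm) with h | hZ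
      · exact h
      · exact absurd hZ hZm

noncomputable def strCol (K : Type) [Field K] {n : ℕ} (i j : Fin n) (J : Set (Sym2 (Fin n)))
    (k : Fin n) : RatFunc K × RatFunc K :=
  letI := fun p => Classical.propDecidable p
  if s(i,k) ∈ J ∧ s(j,k) ∈ J then (0, 0)
  else if k = i ∨ s(i,k) ∈ J then (1, 0)
  else if k = j ∨ s(j,k) ∈ J then (0, 1)
  else (1, RatFunc.X ^ (strIdx i j J k + 1))

lemma strCol_Z (K : Type) [Field K] {n : ℕ} {i j : Fin n} {J : Set (Sym2 (Fin n))} {k : Fin n}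
    (h : s(i,k) ∈ J ∧ s(j,k) ∈ J) : strCol K i j J k = (0, 0) := by
  unfold strCol; split_ifs <;> tauto

lemma strCol_I (K : Type) [Field K] {n : ℕ} {i j : Fin n} {J : Set (Sym2 (Fin n))} {k : Fin n}
    (h0 : ¬(s(i,k) ∈ J ∧ s(j,k) ∈ J)) (h : k = i ∨ s(i,k) ∈ J) : strCol K i j J k = (1, 0) := by
  unfold strCol; split_ifs <;> tauto

lemma strCol_J (K : Type) [Field K] {n : ℕ} {i j : Fin n} {J : Set (Sym2 (Fin n))} {k : Fin n}
    (h0 : ¬(s(i,k) ∈ J ∧ s(j,k) ∈ J)) (h1 : ¬(k = i ∨ s(i,k) ∈ J)) (h : k = j ∨ s(j,k) ∈ J) :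
    strCol K i j J k = (0, 1) := by
  unfold strCol; split_ifs <;> tauto

lemma strCol_E (K : Type) [Field K] {n : ℕ} {i j : Fin n} {J : Set (Sym2 (Fin n))} {k : Fin n}
    (h0 : ¬(s(i,k) ∈ J ∧ s(j,k) ∈ J)) (h1 : ¬(k = i ∨ s(i,k) ∈ J)) (h2 : ¬(k = j ∨ s(j,k) ∈ J)) :
    strCol K i j J k = (1, RatFunc.X ^ (strIdx i j J k + 1)) := by
  unfold strCol; split_ifs <;> tauto

lemma strCol_spec (K : Type) [Field K] {n : ℕ} {i j : Fin n} (hij : i ≠ j)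
    {J : Set (Sym2 (Fin n))} (hJ : s(i,j) ∉ J) (hsat : Saturated i j J) :
    ∀ k l : Fin n, k ≠ l →
      ((strCol K i j J k).1 * (strCol K i j J l).2
          - (strCol K i j J l).1 * (strCol K i j J k).2 = 0 ↔ s(k,l) ∈ J) := by
  have hJ' : s(j,i) ∉ J := fun h => hJ (memJ_swap h)
  have hsat' := sat_symm hsat
  intro k l hkl
  by_cases hZk : s(i,k) ∈ J ∧ s(j,k) ∈ J
  · rw [strCol_Z K hZk]
    exact iff_of_true (by simp) (satZ hJ hsat k hZk l hkl.symm)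
  by_cases hZl : s(i,l) ∈ J ∧ s(j,l) ∈ J
  · rw [strCol_Z K hZl]
    exact iff_of_true (by simp) (memJ_swap (satZ hJ hsat l hZl k hkl))
  by_cases hIk : k = i ∨ s(i,k) ∈ J
  · rw [strCol_I K hZk hIk]
    by_cases hIl : l = i ∨ s(i,l) ∈ J
    · rw [strCol_I K hZl hIl]
      exact iff_of_true (by simp) (satII hij hJ hsat k l hkl hZk hZl hIk hIl)
    by_cases hJl : l = j ∨ s(j,l) ∈ J
    · rw [strCol_J K hZl hIl hJl]
      exact iff_of_false (fun h => one_ne_zero (α := RatFunc K) (by linear_combination h))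
        (satIJ hij hJ hsat k l hkl hZk hZl hIk hJl)
    · rw [strCol_E K hZl hIl hJl]
      refine iff_of_false (fun h => pow_ne_zero (strIdx i j J l + 1) (RatFunc.X_ne_zero (K := K))
        (by linear_combination h)) (satIE hij hJ hsat k l hkl hZk hZl hIk hIl hJl)
  by_cases hJk : k = j ∨ s(j,k) ∈ J
  · rw [strCol_J K hZk hIk hJk]
    by_cases hIl : l = i ∨ s(i,l) ∈ J
    · rw [strCol_I K hZl hIl]
      refine iff_of_false (fun h => one_ne_zero (α := RatFunc K) (by linear_combination -h))
        (satIJ (Ne.symm hij) hJ' hsat' k l hkl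
          (fun hc => hZk ⟨hc.2, hc.1⟩) (fun hc => hZl ⟨hc.2, hc.1⟩) hJk hIl)
    by_cases hJl : l = j ∨ s(j,l) ∈ J
    · rw [strCol_J K hZl hIl hJl]
      exact iff_of_true (by simp)
        (satII (Ne.symm hij) hJ' hsat' k l hkl
          (fun hc => hZk ⟨hc.2, hc.1⟩) (fun hc => hZl ⟨hc.2, hc.1⟩) hJk hJl)
    · rw [strCol_E K hZl hIl hJl]
      refine iff_of_false (fun h => one_ne_zero (α := RatFunc K) (by linear_combination -h))
        (satIE (Ne.symm hij) hJ' hsat' k l hkl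
          (fun hc => hZk ⟨hc.2, hc.1⟩) (fun hc => hZl ⟨hc.2, hc.1⟩) hJk hJl hIl)
  · rw [strCol_E K hZk hIk hJk]
    by_cases hIl : l = i ∨ s(i,l) ∈ J
    · rw [strCol_I K hZl hIl]
      refine iff_of_false (fun h => pow_ne_zero (strIdx i j J k + 1) (RatFunc.X_ne_zero (K := K))
        (by linear_combination -h))
        (fun hmem => satIE hij hJ hsat l k hkl.symm hZl hZk hIl hIk hJk (memJ_swap hmem))
    by_cases hJl : l = j ∨ s(j,l) ∈ J
    · rw [strCol_J K hZl hIl hJl]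
      refine iff_of_false (fun h => one_ne_zero (α := RatFunc K) (by linear_combination h))
        (fun hmem => satIE (Ne.symm hij) hJ' hsat' l k hkl.symm
          (fun hc => hZl ⟨hc.2, hc.1⟩) (fun hc => hZk ⟨hc.2, hc.1⟩) hJl hJk hIk
          (memJ_swap hmem))
    · rw [strCol_E K hZl hIl hJl]
      constructor
      · intro h
        have hp : (RatFunc.X : RatFunc K) ^ (strIdx i j J l + 1)
            = RatFunc.X ^ (strIdx i j J k + 1) := by linear_combination h
        have hidx : strIdx i j J k = strIdx i j J l := by
          have := powinj K _ _ hp; omega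
        exact satEE_of_idx hij hJ hsat k l hkl hZk hIk hJk hZl hIl hJl hidx
      · intro hmem
        rw [strIdx_eq hij hJ hsat k l hkl hZk hIk hJk hZl hIl hJl hmem]
        simp


/-- the torus stratum `Gr_J(2,n)` is nonempty iff `J` is saturated: there is
a field extension `L|K` and a `2 × n` matrix over `L` whose vanishing `2 × 2` minors are
exactly those indexed by `J` if and only if `J` is saturated with respect to `i, j`. -/
theorem grassmann_stratum_nonempty_iff_saturated (K : Type) [Field K]
    {n : ℕ} (hn : 2 ≤ n) (i j : Fin n) (hij : i ≠ j)
    (J : Set (Sym2 (Fin n))) (hJ : s(i, j) ∉ J) :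
    (∃ (L : Type) (_ : Field L) (_ : Algebra K L) (X : Matrix (Fin 2) (Fin n) L),
        ∀ k l : Fin n, k ≠ l →
          ((X 0 k * X 1 l - X 0 l * X 1 k = 0) ↔ s(k, l) ∈ J)) ↔
      Saturated i j J := by
  constructor
  · rintro ⟨L, _, _, X, hX⟩
    have hijm : X 0 i * X 1 j - X 0 j * X 1 i ≠ 0 := fun h => hJ ((hX i j hij).1 h)
    constructor
    · intro k l m hkl hlm hkm hne hJkl hJlm
      have h1 : X 0 k * X 1 l - X 0 l * X 1 k = 0 := (hX k l hkl).2 hJkl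
      have h2 : X 0 l * X 1 m - X 0 m * X 1 l = 0 := (hX l m hlm).2 hJlm
      by_cases hd : X 0 k * X 1 m - X 0 m * X 1 k = 0
      · exact Or.inl ((hX k m hkm).1 hd)
      · have hl0 : X 0 l = 0 := by
          have hc : (X 0 k * X 1 m - X 0 m * X 1 k) * X 0 l = 0 := by
            linear_combination (X 0 m) * h1 + (X 0 k) * h2
          exact (mul_eq_zero.1 hc).resolve_left hd
        have hl1 : X 1 l = 0 := by
          have hc : (X 0 k * X 1 m - X 0 m * X 1 k) * X 1 l = 0 := by
            linear_combination (X 1 m) * h1 + (X 1 k) * h2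
          exact (mul_eq_zero.1 hc).resolve_left hd
        have hli : l ≠ i := by rintro rfl; exact hijm (by rw [hl0, hl1]; ring)
        have hlj : l ≠ j := by rintro rfl; exact hijm (by rw [hl0, hl1]; ring)
        refine Or.inr ⟨(hX i l (Ne.symm hli)).1 (by rw [hl0, hl1]; ring),
          (hX j l (Ne.symm hlj)).1 (by rw [hl0, hl1]; ring)⟩
    · intro k hki hkj hik hjk l hlk
      have h1 : X 0 i * X 1 k - X 0 k * X 1 i = 0 := (hX i k (Ne.symm hki)).2 hik
      have h2 : X 0 j * X 1 k - X 0 k * X 1 j = 0 := (hX j k (Ne.symm hkj)).2 hjk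
      have hk0 : X 0 k = 0 := by
        have hc : (X 0 i * X 1 j - X 0 j * X 1 i) * X 0 k = 0 := by
          linear_combination (X 0 j) * h1 - (X 0 i) * h2
        exact (mul_eq_zero.1 hc).resolve_left hijm
      have hk1 : X 1 k = 0 := by
        have hc : (X 0 i * X 1 j - X 0 j * X 1 i) * X 1 k = 0 := by
          linear_combination (X 1 j) * h1 - (X 1 i) * h2
        exact (mul_eq_zero.1 hc).resolve_left hijm
      exact (hX k l (Ne.symm hlk)).1 (by rw [hk0, hk1]; ring)
  · intro hsat
    refine ⟨RatFunc K, inferInstance, inferInstance,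
      Matrix.of (fun r m => if r = 0 then (strCol K i j J m).1 else (strCol K i j J m).2), ?_⟩
    intro k l hkl
    have e0 : ∀ m : Fin n,
        (Matrix.of (fun r m => if r = 0 then (strCol K i j J m).1 else (strCol K i j J m).2)
          : Matrix (Fin 2) (Fin n) (RatFunc K)) 0 m = (strCol K i j J m).1 := fun m => by
      simp [Matrix.of_apply]
    have e1 : ∀ m : Fin n,
        (Matrix.of (fun r m => if r = 0 then (strCol K i j J m).1 else (strCol K i j J m).2)
          : Matrix (Fin 2) (Fin n) (RatFunc K)) 1 m = (strCol K i j J m).2 := fun m => by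
      simp [Matrix.of_apply]
    rw [e0, e1, e0, e1]
    exact strCol_spec K hij hJ hsat k l hkl
end

section
/- Let K be a field, n ≥ 4, and let J ⊆ Pairs(n) be saturated with respect to distinct i, j ∈ {1,…,n} (so {i,j} ∉ J). Then the ideal 𝔞_J of the polynomial ring R(ij) generated by the set {u_q : q ∈ J ∩ I(ij)} ∪ {u_{ik}u_{jl} − u_{il}u_{jk} : {k,l} ∈ J with k, l ∉ {i,j}} is a prime ideal. -/
open MvPolynomial

namespace AJPrime

open scoped Classical

variable {n : ℕ}

/-- The columns: indices different from `i` and `j`. -/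
abbrev Col (n : ℕ) (i j : Fin n) := {l : Fin n // l ≠ i ∧ l ≠ j}

section Comb

variable (i j : Fin n) (J : Set (Sym2 (Fin n)))

/-- A column is free when it is joined to neither `i` nor `j`. -/
def IsFree (l : Col n i j) : Prop := s(i, l.1) ∉ J ∧ s(j, l.1) ∉ J

/-- The component relation between free columns. -/
def Rel (k l : Col n i j) : Prop :=
  k = l ∨ (IsFree i j J k ∧ IsFree i j J l ∧ s(k.1, l.1) ∈ J)

variable {i j J}

lemma rel_refl (l : Col n i j) : Rel i j J l l := Or.inl rfl

lemma rel_symm {k l : Col n i j} (h : Rel i j J k l) : Rel i j J l k := by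
  rcases h with h | ⟨hk, hl, he⟩
  · exact Or.inl h.symm
  · exact Or.inr ⟨hl, hk, by rwa [Sym2.eq_swap]⟩

lemma ne_val {k l : Col n i j} (h : k ≠ l) : k.1 ≠ l.1 :=
  fun hv => h (Subtype.ext hv)

lemma sym2_ne_ij {a : Fin n} (l : Col n i j) : s(a, l.1) ≠ s(i, j) := by
  intro h
  rw [Sym2.eq_iff] at h
  rcases h with ⟨-, h⟩ | ⟨-, h⟩
  · exact l.2.2 h
  · exact l.2.1 h

lemma rel_trans (hsat : Saturated i j J) {k l m : Col n i j}
    (h1 : Rel i j J k l) (h2 : Rel i j J l m) : Rel i j J k m := by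
  rcases h1 with rfl | ⟨hk, hl, he1⟩
  · exact h2
  rcases h2 with rfl | ⟨-, hm, he2⟩
  · exact Or.inr ⟨hk, hl, he1⟩
  by_cases hkm : k = m
  · exact Or.inl hkm
  refine Or.inr ⟨hk, hm, ?_⟩
  by_cases hkl : k = l
  · subst hkl; exact he2
  by_cases hlm : l = m
  · subst hlm; exact he1
  rcases hsat.1 k.1 l.1 m.1 (ne_val hkl) (ne_val hlm) (ne_val hkm)
    (sym2_ne_ij m) he1 he2 with h | ⟨hI, -⟩
  · exact h
  · exact absurd hI hl.1

/-- Propagation: if `{i,k} ∈ J`, `k` not killed, and `{k,l} ∈ J`, then `{i,l} ∈ J`. -/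
lemma prop_i (hsat : Saturated i j J) {k l : Col n i j} (hik : s(i, k.1) ∈ J)
    (hjk : s(j, k.1) ∉ J) (hkl : s(k.1, l.1) ∈ J) (hne : k ≠ l) : s(i, l.1) ∈ J := by
  rcases hsat.1 i k.1 l.1 (Ne.symm k.2.1) (ne_val hne) (Ne.symm l.2.1)
    (sym2_ne_ij l) hik hkl with h | ⟨-, hJk⟩
  · exact h
  · exact absurd hJk hjk

lemma prop_j (hsat : Saturated i j J) {k l : Col n i j} (hik : s(i, k.1) ∉ J)
    (hjk : s(j, k.1) ∈ J) (hkl : s(k.1, l.1) ∈ J) (hne : k ≠ l) : s(j, l.1) ∈ J := by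
  have hne2 : s(j, l.1) ≠ s(i, j) := by
    intro h
    rw [Sym2.eq_iff] at h
    rcases h with ⟨-, h⟩ | ⟨-, h⟩
    · exact l.2.2 h
    · exact l.2.1 h
  rcases hsat.1 j k.1 l.1 (Ne.symm k.2.2) (ne_val hne) (Ne.symm l.2.2)
    hne2 hjk hkl with h | ⟨hJk, -⟩
  · exact h
  · exact absurd hJk hik

variable (i j J)

/-- The component of a column. -/
noncomputable def relSet (l : Col n i j) : Finset (Col n i j) :=
  Finset.univ.filter (fun m => Rel i j J l m)

lemma relSet_nonempty (l : Col n i j) : (relSet i j J l).Nonempty :=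
  ⟨l, by simp [relSet, rel_refl]⟩

/-- The representative (minimum) of the component of a column. -/
noncomputable def rep (l : Col n i j) : Col n i j :=
  (relSet i j J l).min' (relSet_nonempty i j J l)

variable {i j J}

lemma rel_rep (l : Col n i j) : Rel i j J l (rep i j J l) := by
  have := (relSet i j J l).min'_mem (relSet_nonempty i j J l)
  exact (Finset.mem_filter.mp this).2

lemma rep_eq_of_rel (hsat : Saturated i j J) {k l : Col n i j}
    (h : Rel i j J k l) : rep i j J k = rep i j J l := by
  have hset : relSet i j J k = relSet i j J l := by
    ext m
    simp only [relSet, Finset.mem_filter, Finset.mem_univ, true_and]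
    exact ⟨fun hm => rel_trans hsat (rel_symm h) hm, fun hm => rel_trans hsat h hm⟩
  simp [rep, hset]

lemma rel_of_rep_eq (hsat : Saturated i j J) {k l : Col n i j}
    (h : rep i j J k = rep i j J l) : Rel i j J k l :=
  rel_trans hsat (rel_rep k) (h ▸ rel_symm (rel_rep l))

end Comb


section Alg

variable {K : Type*} [Field K] (i j : Fin n) (J : Set (Sym2 (Fin n)))

lemma uPoly_i (hij : i ≠ j) (l : Col n i j) :
    uPoly (K := K) i j i l.1 = X (false, l) := by
  rw [uPoly, dif_pos (Or.inl rfl), dif_pos l.2, decide_eq_false hij]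

lemma uPoly_j (l : Col n i j) :
    uPoly (K := K) i j j l.1 = X (true, l) := by
  rw [uPoly, dif_pos (Or.inr rfl), dif_pos l.2, decide_eq_true rfl]

lemma uPoly_col (a b : Col n i j) :
    uPoly (K := K) i j a.1 b.1 =
      X (false, a) * X (true, b) - X (false, b) * X (true, a) := by
  have ha : ¬(a.1 = i ∨ a.1 = j) := by rintro (h | h); exacts [a.2.1 h, a.2.2 h]
  have hb : ¬(b.1 = i ∨ b.1 = j) := by rintro (h | h); exacts [b.2.1 h, b.2.2 h]
  rw [uPoly, dif_neg ha, dif_neg hb, dif_pos (⟨a.2, b.2⟩ : _ ∧ _)]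

/-- The Segre-type map on variables. -/
noncomputable def img : VarIJ n i j → MvPolynomial (Col n i j ⊕ Col n i j) K
  | (false, l) => if s(i, l.1) ∈ J then 0 else X (.inl l)
  | (true, l) => if s(j, l.1) ∈ J then 0 else X (.inl l) * X (.inr (rep i j J l))

/-- The exponent of the image monomial. -/
noncomputable def expo : VarIJ n i j → (Col n i j ⊕ Col n i j →₀ ℕ)
  | (false, l) => if s(i, l.1) ∈ J then 0 else Finsupp.single (.inl l) 1
  | (true, l) => if s(j, l.1) ∈ J then 0 else
      Finsupp.single (.inl l) 1 + Finsupp.single (.inr (rep i j J l)) 1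

lemma X_eq_mono {σ : Type*} (v : σ) :
    (X v : MvPolynomial σ K) = monomial (Finsupp.single v 1) 1 := by
  rw [← pow_one (X v), X_pow_eq_monomial]

lemma img_false (l : Col n i j) :
    img (K := K) i j J (false, l) = if s(i, l.1) ∈ J then 0 else X (.inl l) := rfl

lemma img_true (l : Col n i j) :
    img (K := K) i j J (true, l)
      = if s(j, l.1) ∈ J then 0 else X (.inl l) * X (.inr (rep i j J l)) := rfl

lemma img_eq_monomial {v : VarIJ n i j}
    (h : ¬ ((v.1 = false ∧ s(i, v.2.1) ∈ J) ∨ (v.1 = true ∧ s(j, v.2.1) ∈ J))) :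
    img (K := K) i j J v = monomial (expo i j J v) 1 := by
  push_neg at h
  obtain ⟨b, l⟩ := v
  cases b
  · have h1 : s(i, l.1) ∉ J := h.1 rfl
    rw [img_false, expo, if_neg h1, if_neg h1, X_eq_mono]
  · have h1 : s(j, l.1) ∉ J := h.2 rfl
    rw [img_true, expo, if_neg h1, if_neg h1, X_eq_mono, X_eq_mono, monomial_mul, mul_one]

/-- The generating set of the ideal `𝔞_J`. -/
def genSet : Set (Rij K n i j) :=
  {f : Rij K n i j | ∃ (k l : Fin n) (_ : k ≠ l), s(k, l) ∈ J ∧ f = uPoly i j k l}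

variable {i j J}

lemma X_false_mem_genSet (hij : i ≠ j) {l : Col n i j} (h : s(i, l.1) ∈ J) :
    (X (false, l) : Rij K n i j) ∈ genSet i j J :=
  ⟨i, l.1, Ne.symm l.2.1, h, (uPoly_i i j hij l).symm⟩

lemma X_true_mem_genSet {l : Col n i j} (h : s(j, l.1) ∈ J) :
    (X (true, l) : Rij K n i j) ∈ genSet i j J :=
  ⟨j, l.1, Ne.symm l.2.2, h, (uPoly_j i j l).symm⟩

lemma minor_mem_genSet {a b : Col n i j} (hab : a ≠ b) (h : s(a.1, b.1) ∈ J) :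
    (X (false, a) * X (true, b) - X (false, b) * X (true, a) : Rij K n i j)
      ∈ genSet i j J :=
  ⟨a.1, b.1, ne_val hab, h, (uPoly_col i j a b).symm⟩

/-- Every generator is in the kernel of the Segre map. -/
lemma aeval_genSet (hij : i ≠ j) (hJ : s(i, j) ∉ J) (hsat : Saturated i j J)
    {f : Rij K n i j} (hf : f ∈ genSet i j J) :
    aeval (img (K := K) i j J) f = 0 := by
  obtain ⟨k, l, hkl, hmem, rfl⟩ := hf
  by_cases hki : k = i ∨ k = j
  · rw [uPoly, dif_pos hki]
    by_cases hl : l ≠ i ∧ l ≠ j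
    · rw [dif_pos hl, aeval_X]
      rcases hki with rfl | rfl
      · rw [decide_eq_false hij, img_false, if_pos hmem]
      · rw [decide_eq_true rfl, img_true, if_pos hmem]
    · rw [dif_neg hl, map_zero]
  · rw [uPoly, dif_neg hki]
    push_neg at hki
    by_cases hli : l = i ∨ l = j
    · rw [dif_pos hli, dif_pos hki, aeval_X]
      have hmem' : s(l, k) ∈ J := by rwa [Sym2.eq_swap]
      rcases hli with rfl | rfl
      · rw [decide_eq_false hij, img_false, if_pos hmem']
      · rw [decide_eq_true rfl, img_true, if_pos hmem']
    · rw [dif_neg hli]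
      push_neg at hli
      rw [dif_pos (⟨hki, hli⟩ : _ ∧ _), map_sub, map_mul, map_mul, aeval_X, aeval_X,
        aeval_X, aeval_X]
      set a : Col n i j := ⟨k, hki⟩ with ha
      set b : Col n i j := ⟨l, hli⟩ with hb
      have hab : a ≠ b := fun h => hkl (congrArg Subtype.val h)
      have hmemab : s(a.1, b.1) ∈ J := hmem
      have hmemba : s(b.1, a.1) ∈ J := by rwa [Sym2.eq_swap]
      show img (K := K) i j J (false, a) * img i j J (true, b)
        - img i j J (false, b) * img i j J (true, a) = 0
      rw [img_false, img_true, img_false, img_true]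
      by_cases hik : s(i, a.1) ∈ J
      · by_cases hjk : s(j, a.1) ∈ J
        · rw [if_pos hik, if_pos hjk]; ring
        · have : s(i, b.1) ∈ J := prop_i hsat hik hjk hmemab hab
          rw [if_pos hik, if_pos this]; ring
      · by_cases hjk : s(j, a.1) ∈ J
        · have : s(j, b.1) ∈ J := prop_j hsat hik hjk hmemab hab
          rw [if_pos hjk, if_pos this]; ring
        · by_cases hil : s(i, b.1) ∈ J
          · by_cases hjl : s(j, b.1) ∈ J
            · rw [if_pos hil, if_pos hjl]; ring
            · exact absurd (prop_i hsat hil hjl hmemba hab.symm) hik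
          · by_cases hjl : s(j, b.1) ∈ J
            · exact absurd (prop_j hsat hil hjl hmemba hab.symm) hjk
            · have hrel : Rel i j J a b := Or.inr ⟨⟨hik, hjk⟩, ⟨hil, hjl⟩, hmemab⟩
              rw [if_neg hik, if_neg hjk, if_neg hil, if_neg hjl,
                rep_eq_of_rel hsat hrel]
              ring

end Alg


section Std

variable {K : Type*} [Field K] (i j : Fin n) (J : Set (Sym2 (Fin n)))

/-- Standard monomials. -/
def stdM (m : VarIJ n i j →₀ ℕ) : Prop :=
  (∀ l : Col n i j, s(i, l.1) ∈ J → m (false, l) = 0) ∧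
  (∀ l : Col n i j, s(j, l.1) ∈ J → m (true, l) = 0) ∧
  (∀ k l : Col n i j, Rel i j J k l → l.1 < k.1 → (m (false, k) = 0 ∨ m (true, l) = 0))

/-- Weight of a variable, used for the termination measure. -/
def wt : VarIJ n i j → ℕ
  | (false, l) => l.1.val
  | (true, l) => n - l.1.val

/-- Termination measure on monomials. -/
def mu (m : VarIJ n i j →₀ ℕ) : ℕ := m.sum fun v k => k * wt i j v

lemma mu_add (a b : VarIJ n i j →₀ ℕ) : mu i j (a + b) = mu i j a + mu i j b :=
  Finsupp.sum_add_index' (fun _ => by simp) (fun _ _ _ => add_mul _ _ _)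

lemma mu_single (v : VarIJ n i j) (c : ℕ) :
    mu i j (Finsupp.single v c) = c * wt i j v :=
  Finsupp.sum_single_index (by simp)

/-- The submodule of `K`-combinations of standard monomials. -/
def Vstd : Submodule K (Rij K n i j) where
  carrier := {p | ∀ m ∈ p.support, stdM i j J m}
  zero_mem' := fun m hm => absurd hm (by simp)
  add_mem' := by
    intro p q hp hq m hm
    rcases Finset.mem_union.mp (MvPolynomial.support_add hm) with h | h
    · exact hp m h
    · exact hq m h
  smul_mem' := by
    intro c p hp m hm
    exact hp m (Finsupp.support_smul hm)

/-- The sum of standard combinations and the ideal. -/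
noncomputable def bigP : Submodule K (Rij K n i j) :=
  Vstd i j J ⊔ (Ideal.span (genSet (K := K) i j J)).restrictScalars K

variable {i j J}

lemma monomial_factor (m : VarIJ n i j →₀ ℕ) (v : VarIJ n i j) (h : m v ≠ 0) :
    monomial m (1 : K) = monomial (m - Finsupp.single v 1) 1 * X v := by
  have hfs : m - Finsupp.single v 1 + Finsupp.single v 1 = m := by
    ext w
    simp only [Finsupp.add_apply, Finsupp.tsub_apply, Finsupp.single_apply]
    by_cases hw : v = w
    · subst hw; rw [if_pos rfl]; omega
    · rw [if_neg hw]; omega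
  rw [X_eq_mono, monomial_mul, mul_one, hfs]

lemma monomial_mem_bigP (hij : i ≠ j) (hsat : Saturated i j J) :
    ∀ (N : ℕ) (m : VarIJ n i j →₀ ℕ), mu i j m < N → monomial m (1 : K) ∈ bigP i j J := by
  intro N
  induction N with
  | zero => exact fun m h => absurd h (Nat.not_lt_zero _)
  | succ N ih =>
    intro m hm
    by_cases h1 : ∀ l : Col n i j, s(i, l.1) ∈ J → m (false, l) = 0
    swap
    · push_neg at h1
      obtain ⟨l, hil, hml⟩ := h1
      rw [monomial_factor m (false, l) hml]
      refine Submodule.mem_sup_right ((Submodule.restrictScalars_mem _ _ _).mpr ?_)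
      exact Ideal.mul_mem_left _ _ (Ideal.subset_span (X_false_mem_genSet hij hil))
    by_cases h2 : ∀ l : Col n i j, s(j, l.1) ∈ J → m (true, l) = 0
    swap
    · push_neg at h2
      obtain ⟨l, hjl, hml⟩ := h2
      rw [monomial_factor m (true, l) hml]
      refine Submodule.mem_sup_right ((Submodule.restrictScalars_mem _ _ _).mpr ?_)
      exact Ideal.mul_mem_left _ _ (Ideal.subset_span (X_true_mem_genSet hjl))
    by_cases h3 : ∀ k l : Col n i j, Rel i j J k l → l.1 < k.1 →
        (m (false, k) = 0 ∨ m (true, l) = 0)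
    · refine Submodule.mem_sup_left ?_
      intro m' hm'
      have hsupp : m' = m := by
        rw [support_monomial, if_neg (one_ne_zero (α := K))] at hm'
        exact Finset.mem_singleton.mp hm'
      subst hsupp
      exact ⟨h1, h2, h3⟩
    · push_neg at h3
      obtain ⟨k, l, hrel, hlt, hk0, hl0⟩ := h3
      have hlk : l ≠ k := fun h => absurd (congrArg Subtype.val h) (ne_of_lt hlt)
      rcases hrel with hrel | ⟨hfk, hfl, hedge⟩
      · exact absurd hrel (Ne.symm hlk)
      have hedge' : s(l.1, k.1) ∈ J := by rwa [Sym2.eq_swap]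
      set m' : VarIJ n i j →₀ ℕ :=
        m - Finsupp.single (false, k) 1 - Finsupp.single (true, l) 1 with hm'
      have hsplit : m = m' + Finsupp.single (false, k) 1 + Finsupp.single (true, l) 1 := by
        ext w
        simp only [hm', Finsupp.add_apply, Finsupp.tsub_apply, Finsupp.single_apply]
        by_cases ha : ((false, k) : VarIJ n i j) = w
        · have hb : ((true, l) : VarIJ n i j) ≠ w := by
            rw [← ha]; intro hc; simpa using congrArg Prod.fst hc
          rw [if_pos ha, if_neg hb, ← ha]
          have := hk0; omega
        · by_cases hb : ((true, l) : VarIJ n i j) = w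
          · rw [if_neg ha, if_pos hb, ← hb]
            have := hl0; omega
          · rw [if_neg ha, if_neg hb]; omega
      have e1 : monomial m' (1 : K) * (X (false, l) * X (true, k)) =
          monomial (m' + Finsupp.single (false, l) 1 + Finsupp.single (true, k) 1) 1 := by
        rw [X_eq_mono, X_eq_mono, monomial_mul, monomial_mul, mul_one, mul_one, add_assoc]
      have e2 : monomial m' (1 : K) * (X (false, k) * X (true, l)) = monomial m 1 := by
        rw [X_eq_mono, X_eq_mono, monomial_mul, monomial_mul, mul_one, mul_one,
          ← add_assoc, ← hsplit]
      have key : monomial m (1 : K) =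
          monomial (m' + Finsupp.single (false, l) 1 + Finsupp.single (true, k) 1) 1 -
            monomial m' 1 *
              (X (false, l) * X (true, k) - X (false, k) * X (true, l)) := by
        rw [mul_sub, e1, e2]; ring
      rw [key]
      refine sub_mem ?_ ?_
      · apply ih
        have hmu1 : mu i j m = mu i j m' + k.1.val + (n - l.1.val) := by
          rw [hsplit, mu_add, mu_add, mu_single, mu_single]
          simp [wt]
        have hmu2 : mu i j (m' + Finsupp.single (false, l) 1 + Finsupp.single (true, k) 1)
            = mu i j m' + l.1.val + (n - k.1.val) := by
          rw [mu_add, mu_add, mu_single, mu_single]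
          simp [wt]
        have hkn : k.1.val < n := k.1.isLt
        have hlk' : l.1.val < k.1.val := hlt
        omega
      · refine Submodule.mem_sup_right ((Submodule.restrictScalars_mem _ _ _).mpr ?_)
        exact Ideal.mul_mem_left _ _ (Ideal.subset_span (minor_mem_genSet hlk hedge'))

lemma all_mem_bigP (hij : i ≠ j) (hsat : Saturated i j J) (p : Rij K n i j) :
    p ∈ bigP i j J := by
  rw [MvPolynomial.as_sum p]
  refine Submodule.sum_mem _ fun m hm => ?_
  have : monomial m (coeff m p) = coeff m p • monomial m (1 : K) := by
    rw [smul_monomial, smul_eq_mul, mul_one]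
  rw [this]
  exact Submodule.smul_mem _ _
    (monomial_mem_bigP hij hsat (mu i j m).succ m (Nat.lt_succ_self _))

end Std


section Inj

variable {K : Type*} [Field K] (i j : Fin n) (J : Set (Sym2 (Fin n)))

/-- Image exponent of a monomial. -/
noncomputable def Ee (m : VarIJ n i j →₀ ℕ) : Col n i j ⊕ Col n i j →₀ ℕ :=
  m.sum fun v k => k • expo i j J v

lemma expo_false (l : Col n i j) : expo i j J (false, l)
    = if s(i, l.1) ∈ J then 0 else Finsupp.single (.inl l) 1 := rfl

lemma expo_true (l : Col n i j) : expo i j J (true, l)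
    = if s(j, l.1) ∈ J then 0 else
        Finsupp.single (.inl l) 1 + Finsupp.single (.inr (rep i j J l)) 1 := rfl

lemma prod_monomial {α τ : Type*} (s : Finset α) (f : α → (τ →₀ ℕ)) :
    (∏ a ∈ s, monomial (f a) (1 : K)) = monomial (∑ a ∈ s, f a) 1 := by
  induction s using Finset.induction with
  | empty => simp [monomial_zero']
  | @insert a s h ih => rw [Finset.prod_insert h, Finset.sum_insert h, ih, monomial_mul, mul_one]

variable {i j J}

lemma stdM_nonzero_img {m : VarIJ n i j →₀ ℕ} (hm : stdM i j J m) {v : VarIJ n i j}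
    (hv : v ∈ m.support) : img (K := K) i j J v = monomial (expo i j J v) 1 := by
  obtain ⟨b, l⟩ := v
  cases b
  · refine img_eq_monomial i j J ?_
    rintro (⟨-, hmem⟩ | ⟨hb, -⟩)
    · exact Finsupp.mem_support_iff.mp hv (hm.1 l hmem)
    · simp at hb
  · refine img_eq_monomial i j J ?_
    rintro (⟨hb, -⟩ | ⟨-, hmem⟩)
    · simp at hb
    · exact Finsupp.mem_support_iff.mp hv (hm.2.1 l hmem)

lemma aeval_monomial_std {m : VarIJ n i j →₀ ℕ} (hm : stdM i j J m) :
    aeval (img (K := K) i j J) (monomial m (1 : K)) = monomial (Ee i j J m) 1 := by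
  rw [aeval_monomial, map_one, one_mul, Finsupp.prod]
  have hcongr : ∀ v ∈ m.support,
      img (K := K) i j J v ^ (m v) = monomial ((m v) • expo i j J v) 1 := fun v hv => by
    rw [stdM_nonzero_img hm hv, monomial_pow, one_pow]
  rw [Finset.prod_congr rfl hcongr, prod_monomial]
  rfl

lemma Ee_apply (m : VarIJ n i j →₀ ℕ) (c : Col n i j ⊕ Col n i j) :
    Ee i j J m c = ∑ v : VarIJ n i j, m v * expo i j J v c := by
  rw [Ee, Finsupp.sum, Finsupp.finset_sum_apply]
  rw [Finset.sum_subset (Finset.subset_univ _)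
    (fun v _ hv => by rw [Finsupp.notMem_support_iff.mp hv]; simp)]
  exact Finset.sum_congr rfl fun v _ => by rw [Finsupp.smul_apply, smul_eq_mul]

lemma Ee_inl {m : VarIJ n i j →₀ ℕ} (hm : stdM i j J m) (l : Col n i j) :
    Ee i j J m (.inl l) = m (false, l) + m (true, l) := by
  rw [Ee_apply, Fintype.sum_prod_type, Fintype.sum_bool]
  have htrue : ∀ l' : Col n i j,
      m (true, l') * expo i j J (true, l') (Sum.inl l)
        = if l' = l then m (true, l') else 0 := by
    intro l'
    rw [expo_true]
    by_cases hc : s(j, l'.1) ∈ J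
    · rw [if_pos hc, Finsupp.coe_zero, Pi.zero_apply, mul_zero, hm.2.1 l' hc]
      simp
    · rw [if_neg hc, Finsupp.add_apply, Finsupp.single_apply, Finsupp.single_apply,
        if_neg (by simp : ¬ (Sum.inr (rep i j J l') = Sum.inl l)), add_zero]
      by_cases hl' : l' = l
      · subst hl'; rw [if_pos rfl, if_pos rfl, mul_one]
      · rw [if_neg (by simpa using hl'), if_neg hl', mul_zero]
  have hfalse : ∀ l' : Col n i j,
      m (false, l') * expo i j J (false, l') (Sum.inl l)
        = if l' = l then m (false, l') else 0 := by
    intro l'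
    rw [expo_false]
    by_cases hc : s(i, l'.1) ∈ J
    · rw [if_pos hc, Finsupp.coe_zero, Pi.zero_apply, mul_zero, hm.1 l' hc]
      simp
    · rw [if_neg hc, Finsupp.single_apply]
      by_cases hl' : l' = l
      · subst hl'; rw [if_pos rfl, if_pos rfl, mul_one]
      · rw [if_neg (by simpa using hl'), if_neg hl', mul_zero]
  rw [Finset.sum_congr rfl fun l' _ => htrue l', Finset.sum_congr rfl fun l' _ => hfalse l',
    Finset.sum_ite_eq' Finset.univ l, Finset.sum_ite_eq' Finset.univ l,
    if_pos (Finset.mem_univ l), if_pos (Finset.mem_univ l)]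
  exact Nat.add_comm _ _

lemma Ee_inr {m : VarIJ n i j →₀ ℕ} (hm : stdM i j J m) (c : Col n i j) :
    Ee i j J m (.inr c)
      = ∑ l ∈ Finset.univ.filter (fun l : Col n i j => rep i j J l = c), m (true, l) := by
  rw [Ee_apply, Fintype.sum_prod_type, Fintype.sum_bool]
  have hfalse : ∀ l' : Col n i j,
      m (false, l') * expo i j J (false, l') (Sum.inr c) = 0 := by
    intro l'
    rw [expo_false]
    by_cases hc : s(i, l'.1) ∈ J
    · rw [if_pos hc, Finsupp.coe_zero, Pi.zero_apply, mul_zero]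
    · rw [if_neg hc, Finsupp.single_apply,
        if_neg (by simp : ¬ (Sum.inl l' = Sum.inr c)), mul_zero]
  have htrue : ∀ l' : Col n i j,
      m (true, l') * expo i j J (true, l') (Sum.inr c)
        = if rep i j J l' = c then m (true, l') else 0 := by
    intro l'
    rw [expo_true]
    by_cases hc : s(j, l'.1) ∈ J
    · rw [if_pos hc, Finsupp.coe_zero, Pi.zero_apply, mul_zero, hm.2.1 l' hc]
      simp
    · rw [if_neg hc, Finsupp.add_apply, Finsupp.single_apply, Finsupp.single_apply,
        if_neg (by simp : ¬ (Sum.inl l' = Sum.inr c)), zero_add]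
      by_cases hl' : rep i j J l' = c
      · rw [if_pos (by rw [hl']), if_pos hl', mul_one]
      · rw [if_neg (by simpa using hl'), if_neg hl', mul_zero]
  rw [Finset.sum_congr rfl fun l' _ => htrue l', Finset.sum_congr rfl fun l' _ => hfalse l',
    Finset.sum_const_zero, add_zero, ← Finset.sum_filter]

lemma Ee_inj (hsat : Saturated i j J) {m m' : VarIJ n i j →₀ ℕ}
    (hm : stdM i j J m) (hm' : stdM i j J m')
    (hE : Ee i j J m = Ee i j J m') : m = m' := by
  have h1 : ∀ l : Col n i j,
      m (false, l) + m (true, l) = m' (false, l) + m' (true, l) := fun l => by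
    rw [← Ee_inl hm l, ← Ee_inl hm' l, hE]
  have h2 : ∀ c : Col n i j,
      ∑ l ∈ Finset.univ.filter (fun l : Col n i j => rep i j J l = c), m (true, l)
        = ∑ l ∈ Finset.univ.filter (fun l : Col n i j => rep i j J l = c), m' (true, l) :=
    fun c => by rw [← Ee_inr hm c, ← Ee_inr hm' c, hE]
  have key : ∀ l k : Col n i j, rep i j J l = rep i j J k →
      m' (true, l) < m (true, l) → m (true, k) < m' (true, k) → False := by
    intro l k hrep hl hk
    have hxl' : 0 < m' (false, l) := by have := h1 l; omega
    have hxk : 0 < m (false, k) := by have := h1 k; omega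
    have hrel : Rel i j J l k := rel_of_rep_eq hsat hrep
    rcases lt_trichotomy l.1 k.1 with hc | hc | hc
    · rcases hm.2.2 k l (rel_symm hrel) hc with h | h <;> omega
    · have : l = k := Subtype.ext hc; subst this; omega
    · rcases hm'.2.2 l k hrel hc with h | h <;> omega
  have htrue : ∀ l : Col n i j, m (true, l) = m' (true, l) := by
    intro l0
    have hmem : l0 ∈ Finset.univ.filter
        (fun l : Col n i j => rep i j J l = rep i j J l0) := by simp
    by_cases hcmp : ∀ l ∈ Finset.univ.filter
        (fun l : Col n i j => rep i j J l = rep i j J l0), m (true, l) ≤ m' (true, l)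
    · exact (Finset.sum_eq_sum_iff_of_le hcmp).mp (h2 (rep i j J l0)) l0 hmem
    · push_neg at hcmp
      obtain ⟨l1, hl1mem, hl1⟩ := hcmp
      have hge : ∀ l ∈ Finset.univ.filter
          (fun l : Col n i j => rep i j J l = rep i j J l0),
          m' (true, l) ≤ m (true, l) := by
        intro l2 hl2mem
        by_contra hlt
        push_neg at hlt
        refine key l1 l2 ?_ hl1 hlt
        rw [(Finset.mem_filter.mp hl1mem).2, (Finset.mem_filter.mp hl2mem).2]
      exact ((Finset.sum_eq_sum_iff_of_le hge).mp (h2 (rep i j J l0)).symm l0 hmem).symm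
  ext v
  obtain ⟨b, l⟩ := v
  cases b
  · have ha := h1 l
    have hb := htrue l
    omega
  · exact htrue l

lemma vstd_inj (hsat : Saturated i j J) {p : Rij K n i j} (hp : p ∈ Vstd i j J)
    (h0 : aeval (img (K := K) i j J) p = 0) : p = 0 := by
  by_contra hne
  obtain ⟨m0, hm0⟩ : p.support.Nonempty := by
    rw [Finset.nonempty_iff_ne_empty]
    intro h
    exact hne (by rwa [MvPolynomial.support_eq_empty] at h)
  have hstd : ∀ m ∈ p.support, stdM i j J m := hp
  have hkey : coeff (Ee i j J m0) (aeval (img (K := K) i j J) p) = coeff m0 p := by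
    conv_lhs => rw [MvPolynomial.as_sum p]
    rw [map_sum, coeff_sum]
    rw [Finset.sum_eq_single_of_mem m0 hm0]
    · have : monomial m0 (coeff m0 p) = coeff m0 p • monomial m0 (1 : K) := by
        rw [smul_monomial, smul_eq_mul, mul_one]
      rw [this, map_smul, aeval_monomial_std (hstd m0 hm0), coeff_smul, coeff_monomial,
        if_pos rfl, smul_eq_mul, mul_one]
    · intro m hm hmne
      have : monomial m (coeff m p) = coeff m p • monomial m (1 : K) := by
        rw [smul_monomial, smul_eq_mul, mul_one]
      rw [this, map_smul, aeval_monomial_std (hstd m hm), coeff_smul, coeff_monomial,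
        if_neg (fun h => hmne (Ee_inj hsat (hstd m hm) (hstd m0 hm0) h)), smul_eq_mul,
        mul_zero]
  rw [h0, coeff_zero] at hkey
  exact Finsupp.mem_support_iff.mp hm0 hkey.symm

end Inj

end AJPrime


/-- for `J` saturated with respect to `i, j`, the ideal
`𝔞_J = ⟨u_q : q ∈ J ∩ I(ij)⟩ + ⟨u_{ik}u_{jl} − u_{il}u_{jk} : {k,l} ∈ J, k,l ∉ {i,j}⟩`
of `R(ij)` (i.e. the ideal generated by the elements `u_{kl}` for `{k,l} ∈ J`) is
prime. -/
theorem ideal_aJ_isPrime {K : Type*} [Field K] {n : ℕ} (hn : 4 ≤ n)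
    (i j : Fin n) (hij : i ≠ j) (J : Set (Sym2 (Fin n))) (hJ : s(i, j) ∉ J)
    (hsat : Saturated i j J) :
    (Ideal.span {f : Rij K n i j |
        ∃ (k l : Fin n) (_ : k ≠ l), s(k, l) ∈ J ∧ f = uPoly i j k l}).IsPrime := by
  classical
  have hspan : ({f : Rij K n i j |
      ∃ (k l : Fin n) (_ : k ≠ l), s(k, l) ∈ J ∧ f = uPoly i j k l} : Set (Rij K n i j))
      = AJPrime.genSet (K := K) i j J := rfl
  rw [hspan]
  set Φ : Rij K n i j →ₐ[K] MvPolynomial (AJPrime.Col n i j ⊕ AJPrime.Col n i j) K :=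
    MvPolynomial.aeval (AJPrime.img (K := K) i j J) with hΦ
  have hle : Ideal.span (AJPrime.genSet (K := K) i j J) ≤ RingHom.ker Φ := by
    rw [Ideal.span_le]
    intro f hf
    exact SetLike.mem_coe.mpr (RingHom.mem_ker.mpr (AJPrime.aeval_genSet hij hJ hsat hf))
  have hker : Ideal.span (AJPrime.genSet (K := K) i j J) = RingHom.ker Φ := by
    refine le_antisymm hle ?_
    intro f hf
    obtain ⟨g, hg, h, hh, hsum⟩ :=
      Submodule.mem_sup.mp (AJPrime.all_mem_bigP hij hsat f)
    have hh' : h ∈ Ideal.span (AJPrime.genSet (K := K) i j J) :=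
      (Submodule.restrictScalars_mem _ _ _).mp hh
    have hg0 : Φ g = 0 := by
      have hf0 : Φ f = 0 := RingHom.mem_ker.mp hf
      have hh0 : Φ h = 0 := RingHom.mem_ker.mp (hle hh')
      have : g = f - h := by rw [← hsum]; ring
      rw [this, map_sub, hf0, hh0, sub_zero]
    have hgz : g = 0 := AJPrime.vstd_inj hsat hg hg0
    rw [← hsum, hgz, zero_add]
    exact hh'
  rw [hker]
  exact RingHom.ker_isPrime Φ
end

section
/- Let γ be a multiplicative nonarchimedean seminorm on A_n extending |·|. Then for all pairwise distinct i, j, k, l ∈ {1,…,n}, the maximum of the three real numbers γ(p̄_{ij})·γ(p̄_{kl}), γ(p̄_{ik})·γ(p̄_{jl}), γ(p̄_{il})·γ(p̄_{jk}) is attained by at least two of them. Equivalently, every point of the tropicalization of the Grassmannian Gr(2,n) satisfies the four-point condition. -/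
open MvPolynomial

/-- `γ` is a multiplicative nonarchimedean seminorm on the commutative `K`-algebra `A`
extending the absolute value `abv` on `K`. -/
def IsMultSeminorm {K A : Type*} [Field K] [CommRing A] [Algebra K A]
    (abv : K → ℝ) (γ : A → ℝ) : Prop :=
  (∀ f, 0 ≤ γ f) ∧ γ 0 = 0 ∧ γ 1 = 1 ∧
    (∀ f g, γ (f * g) = γ f * γ g) ∧
    (∀ f g, γ (f + g) ≤ max (γ f) (γ g)) ∧
    (∀ c : K, γ (algebraMap K A c) = abv c)

/-- Pairs(n): the 2-element subsets of {1,…,n}, encoded as non-diagonal elements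
of `Sym2 (Fin n)`. -/
abbrev Pairs (n : ℕ) := {q : Sym2 (Fin n) // ¬ q.IsDiag}

/-- The pair {a,b} for a ≠ b. -/
def mkPair {n : ℕ} (a b : Fin n) (h : a ≠ b) : Pairs n :=
  ⟨s(a, b), by simp [Sym2.mk_isDiag_iff, h]⟩

/-- The Plücker ideal `I_{2,n}`, generated by the three-term Plücker relations
`p_{ab} p_{cd} − p_{ac} p_{bd} + p_{ad} p_{bc}` for `a < b < c < d`. -/
noncomputable def pluckerIdeal (K : Type*) [Field K] (n : ℕ) : Ideal (MvPolynomial (Pairs n) K) :=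
  Ideal.span {F | ∃ (a b c d : Fin n) (h1 : a < b) (h2 : b < c) (h3 : c < d),
    F = X (mkPair a b h1.ne) * X (mkPair c d h3.ne)
        - X (mkPair a c (h1.trans h2).ne) * X (mkPair b d (h2.trans h3).ne)
        + X (mkPair a d (h1.trans (h2.trans h3)).ne) * X (mkPair b c h2.ne)}

/-- The homogeneous coordinate ring `A_n = P_n / I_{2,n}` of the Grassmannian Gr(2,n). -/
abbrev An (K : Type*) [Field K] (n : ℕ) := MvPolynomial (Pairs n) K ⧸ pluckerIdeal K n

/-- The Plücker coordinate `p̄_q ∈ A_n`. -/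
noncomputable def pbar {K : Type*} [Field K] {n : ℕ} (q : Pairs n) : An K n :=
  Ideal.Quotient.mk _ (X q)

/-- The maximum of the three reals `a`, `b`, `c` is attained at least twice. -/
def MaxTwice (a b c : ℝ) : Prop := (a = b ∧ c ≤ a) ∨ (a = c ∧ b ≤ a) ∨ (b = c ∧ a ≤ b)

/- ------------------- auxiliary lemmas ------------------- -/

lemma maxTwice_of_le (a b c : ℝ) (h1 : a ≤ max b c) (h2 : b ≤ max a c)
    (h3 : c ≤ max a b) : MaxTwice a b c := by
  unfold MaxTwice
  rcases le_total b c with h | h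
  · rcases le_total a b with h' | h'
    · right; right
      constructor
      · exact le_antisymm h (by simpa [max_eq_right h'] using h3)
      · exact h'
    · have hac : a ≤ c := by simpa [max_eq_right h] using h1
      have hca : c ≤ a := by simpa [max_eq_left h'] using h3
      right; left
      exact ⟨le_antisymm hac hca, h'⟩
  · rcases le_total a c with h' | h'
    · right; right
      constructor
      · exact le_antisymm (by simpa [max_eq_right h'] using h2) h
      · exact h'.trans h
    · have hab : a ≤ b := by simpa [max_eq_left h] using h1
      have hba : b ≤ a := by simpa [max_eq_left h'] using h2
      left
      exact ⟨le_antisymm hab hba, h.trans hba⟩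

lemma maxTwice_swap12 {a b c : ℝ} (h : MaxTwice a b c) : MaxTwice b a c := by
  unfold MaxTwice at *
  rcases h with ⟨h, h'⟩ | ⟨h, h'⟩ | ⟨h, h'⟩
  · exact Or.inl ⟨h.symm, h ▸ h'⟩
  · exact Or.inr (Or.inr ⟨h, h'⟩)
  · exact Or.inr (Or.inl ⟨h, h'⟩)

lemma maxTwice_swap23 {a b c : ℝ} (h : MaxTwice a b c) : MaxTwice a c b := by
  unfold MaxTwice at *
  rcases h with ⟨h, h'⟩ | ⟨h, h'⟩ | ⟨h, h'⟩
  · exact Or.inr (Or.inl ⟨h, h'⟩)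
  · exact Or.inl ⟨h, h'⟩
  · exact Or.inr (Or.inr ⟨h.symm, h ▸ h'⟩)

lemma maxTwice_cyc {a b c : ℝ} (h : MaxTwice a b c) : MaxTwice c a b :=
  maxTwice_swap12 (maxTwice_swap23 h)

section Seminorm

variable {K A : Type*} [Field K] [CommRing A] [Algebra K A]
  {abv : K → ℝ} {γ : A → ℝ} (hγ : IsMultSeminorm abv γ)

lemma gamma_neg_one (hγ : IsMultSeminorm abv γ) : γ (-1 : A) = 1 := by
  obtain ⟨hpos, h0, h1, hmul, hadd, hext⟩ := hγ
  have h : γ (-1 : A) * γ (-1 : A) = 1 := by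
    rw [← hmul]; simpa using h1
  nlinarith [hpos (-1 : A)]

lemma gamma_neg (hγ : IsMultSeminorm abv γ) (f : A) : γ (-f) = γ f := by
  have := hγ.2.2.2.1 (-1 : A) f
  rw [neg_one_mul] at this
  rw [this, gamma_neg_one hγ, one_mul]

lemma ultra3 (hγ : IsMultSeminorm abv γ) (f g h : A) (hsum : f + g + h = 0) :
    MaxTwice (γ f) (γ g) (γ h) := by
  obtain ⟨hpos, h0, h1, hmul, hadd, hext⟩ := hγ
  have hf : f = -(g + h) := by linear_combination hsum
  have hg : g = -(f + h) := by linear_combination hsum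
  have hh : h = -(f + g) := by linear_combination hsum
  refine maxTwice_of_le _ _ _ ?_ ?_ ?_
  · calc γ f = γ (g + h) := by rw [hf, gamma_neg ⟨hpos, h0, h1, hmul, hadd, hext⟩]
    _ ≤ max (γ g) (γ h) := hadd g h
  · calc γ g = γ (f + h) := by rw [hg, gamma_neg ⟨hpos, h0, h1, hmul, hadd, hext⟩]
    _ ≤ max (γ f) (γ h) := hadd f h
  · calc γ h = γ (f + g) := by rw [hh, gamma_neg ⟨hpos, h0, h1, hmul, hadd, hext⟩]
    _ ≤ max (γ f) (γ g) := hadd f g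

end Seminorm

section Grass

variable {K : Type*} [Field K] {n : ℕ}

lemma mkPair_comm (a b : Fin n) (h : a ≠ b) : mkPair a b h = mkPair b a h.symm :=
  Subtype.ext (Sym2.eq_swap)

/-- A version of `γ(p̄_{ab})` not depending on a disequality proof. -/
noncomputable def gp (γ : An K n → ℝ) (a b : Fin n) : ℝ :=
  if h : a = b then 0 else γ (pbar (mkPair a b h))

lemma gp_eq (γ : An K n → ℝ) {a b : Fin n} (h : a ≠ b) :
    gp γ a b = γ (pbar (mkPair a b h)) := dif_neg h

lemma gp_comm (γ : An K n → ℝ) (a b : Fin n) : gp γ a b = gp γ b a := by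
  rcases eq_or_ne a b with rfl | h
  · rfl
  · rw [gp_eq γ h, gp_eq γ h.symm, mkPair_comm a b h]

variable {abv : K → ℝ} {γ : An K n → ℝ}

lemma base (hγ : IsMultSeminorm abv γ) (a b c d : Fin n)
    (h1 : a < b) (h2 : b < c) (h3 : c < d) :
    MaxTwice (gp γ a b * gp γ c d) (gp γ a c * gp γ b d) (gp γ a d * gp γ b c) := by
  have hmem : (X (mkPair a b h1.ne) * X (mkPair c d h3.ne)
      - X (mkPair a c (h1.trans h2).ne) * X (mkPair b d (h2.trans h3).ne)
      + X (mkPair a d (h1.trans (h2.trans h3)).ne) * X (mkPair b c h2.ne) :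
        MvPolynomial (Pairs n) K) ∈ pluckerIdeal K n :=
    Ideal.subset_span ⟨a, b, c, d, h1, h2, h3, rfl⟩
  have h0 : pbar (mkPair a b h1.ne) * pbar (mkPair c d h3.ne)
      + (-(pbar (mkPair a c (h1.trans h2).ne) * pbar (mkPair b d (h2.trans h3).ne)))
      + pbar (mkPair a d (h1.trans (h2.trans h3)).ne) * pbar (mkPair b c h2.ne)
      = (0 : An K n) := by
    have heq : (X (mkPair a b h1.ne) * X (mkPair c d h3.ne)
        + -(X (mkPair a c (h1.trans h2).ne) * X (mkPair b d (h2.trans h3).ne))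
        + X (mkPair a d (h1.trans (h2.trans h3)).ne) * X (mkPair b c h2.ne) :
          MvPolynomial (Pairs n) K)
        = X (mkPair a b h1.ne) * X (mkPair c d h3.ne)
        - X (mkPair a c (h1.trans h2).ne) * X (mkPair b d (h2.trans h3).ne)
        + X (mkPair a d (h1.trans (h2.trans h3)).ne) * X (mkPair b c h2.ne) := by ring
    simp only [pbar, ← map_mul, ← map_neg, ← map_add, heq]
    exact Ideal.Quotient.eq_zero_iff_mem.mpr hmem
  have hmt := ultra3 hγ _ _ _ h0
  have hmul := hγ.2.2.2.1
  rw [hmul, gamma_neg hγ, hmul, hmul] at hmt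
  rw [gp_eq γ h1.ne, gp_eq γ h3.ne, gp_eq γ (h1.trans h2).ne,
    gp_eq γ (h2.trans h3).ne, gp_eq γ (h1.trans (h2.trans h3)).ne, gp_eq γ h2.ne]
  exact hmt

lemma key (hγ : IsMultSeminorm abv γ) :
    ∀ i j k l : Fin n, i ≠ j → i ≠ k → i ≠ l → j ≠ k → j ≠ l → k ≠ l →
    MaxTwice (gp γ i j * gp γ k l) (gp γ i k * gp γ j l) (gp γ i l * gp γ j k) := by
  -- Step 1: reduce to the case i < j
  suffices H1 : ∀ i j k l : Fin n, i < j → i ≠ k → i ≠ l → j ≠ k → j ≠ l → k ≠ l →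
      MaxTwice (gp γ i j * gp γ k l) (gp γ i k * gp γ j l) (gp γ i l * gp γ j k) by
    intro i j k l hij hik hil hjk hjl hkl
    rcases hij.lt_or_gt with h | h
    · exact H1 i j k l h hik hil hjk hjl hkl
    · have := H1 j i k l h hjk hjl hik hil hkl
      rw [gp_comm γ j i, mul_comm (gp γ j k), mul_comm (gp γ j l)] at this
      exact maxTwice_swap23 this
  -- Step 2: reduce to the case i < j, k < l
  suffices H2 : ∀ i j k l : Fin n, i < j → k < l → i ≠ k → i ≠ l → j ≠ k → j ≠ l →
      MaxTwice (gp γ i j * gp γ k l) (gp γ i k * gp γ j l) (gp γ i l * gp γ j k) by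
    intro i j k l hij hik hil hjk hjl hkl
    rcases hkl.lt_or_gt with h | h
    · exact H2 i j k l hij h hik hil hjk hjl
    · have := H2 i j l k hij h hil hik hjl hjk
      rw [gp_comm γ l k] at this
      exact maxTwice_swap23 this
  -- Step 3: reduce to the case i < j, k < l, i < k
  suffices H3 : ∀ i j k l : Fin n, i < j → k < l → i < k → i ≠ l → j ≠ k → j ≠ l →
      MaxTwice (gp γ i j * gp γ k l) (gp γ i k * gp γ j l) (gp γ i l * gp γ j k) by
    intro i j k l hij hkl hik hil hjk hjl
    rcases hik.lt_or_gt with h | h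
    · exact H3 i j k l hij hkl h hil hjk hjl
    · have := H3 k l i j hkl hij h hjk.symm hil.symm hjl.symm
      rw [gp_comm γ k i, gp_comm γ l j, gp_comm γ k j, gp_comm γ l i,
        mul_comm (gp γ k l) (gp γ i j), mul_comm (gp γ j k) (gp γ i l)] at this
      exact this
  intro i j k l hij hkl hik hil hjk hjl
  rcases hjk.lt_or_gt with h | h
  · -- i < j < k < l : sorted
    exact base hγ i j k l hij h hkl
  · rcases hjl.lt_or_gt with h' | h'
    · -- i < k < j < l
      have := base hγ i k j l hik h h'
      rw [gp_comm γ k j] at this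
      exact maxTwice_swap12 this
    · -- i < k < l < j
      have := base hγ i k l j hik hkl h'
      rw [gp_comm γ l j, gp_comm γ k j] at this
      exact maxTwice_cyc this

end Grass

/-- every multiplicative nonarchimedean seminorm on `A_n` extending `abv`
satisfies the four-point condition: for pairwise distinct `i, j, k, l`, the maximum of
`γ(p̄_{ij})γ(p̄_{kl})`, `γ(p̄_{ik})γ(p̄_{jl})`, `γ(p̄_{il})γ(p̄_{jk})` is attained at
least twice. -/
theorem fourPoint_of_seminorm {K : Type*} [Field K] (abv : K → ℝ) (habv : IsNonarchAbs abv)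
    {n : ℕ} (hn : 4 ≤ n) (γ : An K n → ℝ) (hγ : IsMultSeminorm abv γ)
    (i j k l : Fin n) (hij : i ≠ j) (hik : i ≠ k) (hil : i ≠ l)
    (hjk : j ≠ k) (hjl : j ≠ l) (hkl : k ≠ l) :
    MaxTwice (γ (pbar (mkPair i j hij)) * γ (pbar (mkPair k l hkl)))
      (γ (pbar (mkPair i k hik)) * γ (pbar (mkPair j l hjl)))
      (γ (pbar (mkPair i l hil)) * γ (pbar (mkPair j k hjk))) := by
  have := key hγ i j k l hij hik hil hjk hjl hkl
  rwa [gp_eq γ hij, gp_eq γ hkl, gp_eq γ hik, gp_eq γ hjl, gp_eq γ hil,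
    gp_eq γ hjk] at this
end

section
/- Let J ⊆ Pairs(n) be saturated with respect to distinct i, j ∈ {1,…,n} (so {i,j} ∉ J). Let Z_0 := {l ∈ {1,…,n} : {i,l} ∈ J and {j,l} ∈ J}, and define a relation ∼ on {1,…,n} ∖ Z_0 by: k ∼ l if and only if k = l or {k,l} ∈ J. Then ∼ is an equivalence relation (reflexivity and symmetry are immediate; the saturation conditions imply transitivity), and i is not equivalent to j. -/
/-- if `J` is saturated with respect to `i, j` and `{i,j} ∉ J`, then with
`Z₀ = {l : {i,l} ∈ J and {j,l} ∈ J}`, the relation `k ∼ l ⟺ k = l or {k,l} ∈ J` on the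
complement of `Z₀` is an equivalence relation, and `i` is not equivalent to `j`. -/
theorem saturated_equivalence {n : ℕ} (i j : Fin n) (hij : i ≠ j)
    (J : Set (Sym2 (Fin n))) (hJ : s(i, j) ∉ J) (hsat : Saturated i j J) :
    let Z0 : Set (Fin n) := {l | s(i, l) ∈ J ∧ s(j, l) ∈ J}
    let r : {k : Fin n // k ∉ Z0} → {k : Fin n // k ∉ Z0} → Prop :=
      fun a b => a = b ∨ s(a.1, b.1) ∈ J
    Equivalence r ∧ i ∉ Z0 ∧ j ∉ Z0 ∧
      ∀ a b : {k : Fin n // k ∉ Z0}, a.1 = i → b.1 = j → ¬ r a b := by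
  intro Z0 r
  refine ⟨⟨fun a => Or.inl rfl, ?_, ?_⟩, ?_, ?_, ?_⟩
  · rintro a b (rfl | h)
    · exact Or.inl rfl
    · exact Or.inr (by rwa [Sym2.eq_swap])
  · rintro a b c (rfl | hab) hbc
    · exact hbc
    · rcases hbc with rfl | hbc
      · exact Or.inr hab
      · by_cases h1 : a.1 = b.1
        · exact Or.inr (h1 ▸ hbc)
        by_cases h2 : b.1 = c.1
        · exact Or.inr (h2 ▸ hab)
        by_cases h3 : a.1 = c.1
        · exact Or.inl (Subtype.ext h3)
        by_cases h4 : s(a.1, c.1) = s(i, j)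
        · rcases Sym2.eq_iff.mp h4 with ⟨ha, hc⟩ | ⟨ha, hc⟩
          · exact absurd ⟨ha ▸ hab, by rw [Sym2.eq_swap]; exact hc ▸ hbc⟩ b.2
          · exact absurd ⟨by rw [Sym2.eq_swap]; exact hc ▸ hbc, ha ▸ hab⟩ b.2
        · rcases hsat.1 a.1 b.1 c.1 h1 h2 h3 h4 hab hbc with h | h
          · exact Or.inr h
          · exact absurd h b.2
  · rintro ⟨-, h⟩
    exact hJ (by rwa [Sym2.eq_swap] at h)
  · rintro ⟨h, -⟩
    exact hJ h
  · rintro a b ha hb (h | h)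
    · exact hij (ha ▸ hb ▸ congrArg Subtype.val h)
    · exact hJ (ha ▸ hb ▸ h)
end
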